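/- arXiv:0710.0167 — 3 statements merged into one kernel-verified Lean document; each statement's English description precedes it below -/
import Mathlib

section
/- Let W be a Coxeter group, J, K ⊆ I subsets, and let w₀ be the minimal-length element of a double coset W_J · w · W_K. Then every element u of this double coset can be written as u = α · w₀ · β with α ∈ W_J, β ∈ W_K, and l(u) = l(α) + l(w₀) + l(β). -/
/-- The standard parabolic subgroup of a Coxeter group generated by the
simple reflections indexed by `J`. -/
def CoxeterSystem.parabolic {B W : Type*} [Group W] {M : CoxeterMatrix B}
    (cs : CoxeterSystem M W) (J : Set B) : Subgroup W :=
  Subgroup.closure (cs.simple '' J)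

/-!
Minimality of `w₀` means that `w₀` has no left descent in `J` and no right descent in `K`.
Stripping such descents off `u` lowers the length by one each time, so by induction on `ℓ u`
it remains to treat a `u` without them, and then `u = w₀`: a double coset contains only one
such element, by Deodhar's lemma and the additivity `ℓ (u * b) = ℓ u + ℓ b` for `b ∈ W_K` when
`u` has no right descent in `K`. Both need the exchange condition, which comes from Tits'
homomorphism `W → (W → ℤ/2) ⋊ W`, `s i ↦ (δ_{s i}, s i)`: it shows that the parity of the
number of occurrences of a reflection in the left inversion sequence of a word depends only
on the product of the word.
-/

open Finset DoubleCoset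

theorem SemidirectProduct.mk_pow {N G : Type*} [CommGroup N] [Group G] {φ : G →* MulAut N}
    (n : N) (g : G) (m : ℕ) :
    (⟨n, g⟩ : N ⋊[φ] G) ^ m = ⟨∏ k ∈ range m, φ (g ^ k) n, g ^ m⟩ := by
  induction m with
  | zero => ext <;> simp
  | succ m ih =>
    rw [pow_succ, ih]
    ext
    · simp only [SemidirectProduct.mul_left, prod_range_succ]
    · simp only [SemidirectProduct.mul_right, pow_succ]

theorem Finset.prod_range_two_mul {M : Type*} [CommMonoid M] (f : ℕ → M) (m : ℕ) :
    ∏ l ∈ range (2 * m), f l = ∏ k ∈ range m, (f (2 * k) * f (2 * k + 1)) := by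
  induction m with
  | zero => simp
  | succ m ih => rw [mul_add_one, prod_range_succ, prod_range_succ, prod_range_succ, ih, mul_assoc]

theorem DoubleCoset.mul_mem_doubleCoset_of_mem_left {G : Type*} [Group G] {H K : Subgroup G}
    {a x v : G} (hx : x ∈ H) (hv : v ∈ doubleCoset a H K) : x * v ∈ doubleCoset a H K := by
  obtain ⟨h, hh, k, hk, rfl⟩ := mem_doubleCoset.mp hv
  exact mem_doubleCoset.mpr ⟨x * h, mul_mem hx hh, k, hk, by simp only [mul_assoc]⟩

theorem DoubleCoset.mul_mem_doubleCoset_of_mem_right {G : Type*} [Group G] {H K : Subgroup G}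
    {a y v : G} (hy : y ∈ K) (hv : v ∈ doubleCoset a H K) : v * y ∈ doubleCoset a H K := by
  obtain ⟨h, hh, k, hk, rfl⟩ := mem_doubleCoset.mp hv
  exact mem_doubleCoset.mpr ⟨h, hh, k * y, mul_mem hk hy, by simp only [mul_assoc]⟩

namespace CoxeterSystem

section ParityFunction

variable {W : Type*} [DecidableEq W]

def oddAt (t : W) : W → Multiplicative (ZMod 2) :=
  Pi.mulSingle t (Multiplicative.ofAdd 1)

theorem oddAt_apply (t x : W) :
    oddAt t x = Multiplicative.ofAdd (if x = t then 1 else 0) := by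
  by_cases h : x = t <;> simp [oddAt, h]

theorem oddAt_mul_self (t : W) : oddAt t * oddAt t = 1 := by
  rw [oddAt, ← Pi.mulSingle_mul, ← ofAdd_add, show (1 + 1 : ZMod 2) = 0 from rfl, ofAdd_zero,
    Pi.mulSingle_one]

end ParityFunction

variable {B W : Type*} [Group W] {M : CoxeterMatrix B} (cs : CoxeterSystem M W)

local prefix:100 "s" => cs.simple
local prefix:100 "π" => cs.wordProd
local prefix:100 "ℓ" => cs.length

def conjArrow : W →* MulAut (W → Multiplicative (ZMod 2)) :=
  mulAutArrow.comp (ConjAct.toConjAct : W ≃* ConjAct W).toMonoidHom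

theorem conjArrow_apply_apply (w : W) (f : W → Multiplicative (ZMod 2)) (t : W) :
    conjArrow w f t = f (w⁻¹ * t * w) := by
  show f ((ConjAct.toConjAct w)⁻¹ • t) = _
  rw [ConjAct.smul_def]
  simp

section Tits

variable [DecidableEq W]

theorem conjArrow_oddAt (w t : W) : conjArrow w (oddAt t) = oddAt (w * t * w⁻¹) := by
  ext1 x
  have : w⁻¹ * x * w = t ↔ x = w * t * w⁻¹ := by
    constructor <;> rintro rfl <;> group
  simp only [conjArrow_apply_apply, oddAt, Pi.mulSingle_apply, this]

theorem count_leftInvSeq_cons (i : B) (ω : List B) (t : W) :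
    (cs.leftInvSeq (i :: ω)).count t
      = (cs.leftInvSeq ω).count (s i * t * s i) + if t = s i then 1 else 0 := by
  have hinv : MulAut.conj (s i) (s i * t * s i) = t := by simp [mul_assoc]
  rw [show cs.leftInvSeq (i :: ω) = s i :: (cs.leftInvSeq ω).map (MulAut.conj (s i)) from rfl,
    List.count_cons, ← hinv, List.count_map_of_injective _ _ (MulAut.conj (s i)).injective, hinv]
  simp only [beq_iff_eq, @eq_comm _ (s i) t]

def titsGen (i : B) : (W → Multiplicative (ZMod 2)) ⋊[conjArrow] W :=
  ⟨oddAt (s i), s i⟩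

theorem isLiftable_titsGen : M.IsLiftable cs.titsGen := by
  intro i j
  set c := s i * s j
  let δ (l : ℕ) := oddAt (c ^ l * s i)
  have hc : c ^ M i j = 1 := cs.simple_mul_simple_pow i j
  -- `s i` conjugates `c` to `c⁻¹`, so conjugating `s i` by `c ^ k` gives `c ^ (2 * k) * s i`
  have hsemi : ∀ k : ℕ, s i * c⁻¹ ^ k = c ^ k * s i :=
    SemiconjBy.pow_right (by simp [c, SemiconjBy, mul_assoc])
  have hconj : ∀ k l : ℕ, c ^ k * (c ^ l * s i) * (c ^ k)⁻¹ = c ^ (2 * k + l) * s i := by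
    intro k l
    rw [← inv_pow, mul_assoc, mul_assoc, hsemi, two_mul, pow_add, pow_add]
    group
  have hgen : cs.titsGen i * cs.titsGen j = ⟨δ 0 * δ 1, c⟩ := by
    ext : 1
    · simp [titsGen, δ, conjArrow_oddAt, c]
    · rfl
  have hper : ∀ l, δ (M i j + l) = δ l := by
    intro l
    simp only [δ, pow_add, hc, one_mul]
  rw [hgen, SemidirectProduct.mk_pow]
  ext : 1
  · show ∏ k ∈ range (M i j), conjArrow (c ^ k) (δ 0 * δ 1) = 1
    have hk : ∀ k, conjArrow (c ^ k) (δ 0 * δ 1) = δ (2 * k) * δ (2 * k + 1) := by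
      intro k
      simp only [δ, map_mul, conjArrow_oddAt, hconj, add_zero]
    -- as `c ^ M i j = 1`, each of the `2 * M i j` factors `δ l` occurs twice
    rw [prod_congr rfl fun k _ => hk k, ← prod_range_two_mul, two_mul, prod_range_add]
    simp only [hper, ← prod_mul_distrib, δ, oddAt_mul_self, prod_const_one]
  · exact hc

noncomputable def titsHom : W →* (W → Multiplicative (ZMod 2)) ⋊[conjArrow] W :=
  cs.lift ⟨cs.titsGen, cs.isLiftable_titsGen⟩

theorem titsHom_wordProd_left (ω : List B) (t : W) :
    (cs.titsHom (π ω)).left t = Multiplicative.ofAdd ((cs.leftInvSeq ω).count t : ZMod 2) := by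
  induction ω generalizing t with
  | nil => simp
  | cons i ω ih =>
    rw [cs.wordProd_cons, map_mul, titsHom, cs.lift_apply_simple, ← titsHom,
      SemidirectProduct.mul_left, Pi.mul_apply, conjArrow_apply_apply]
    simp only [titsGen, cs.inv_simple]
    rw [ih, count_leftInvSeq_cons, oddAt_apply, ← ofAdd_add]
    push_cast
    rw [add_comm]

theorem count_leftInvSeq_eq_of_wordProd_eq {ω ω' : List B} (h : π ω = π ω') (t : W) :
    ((cs.leftInvSeq ω).count t : ZMod 2) = (cs.leftInvSeq ω').count t :=
  Multiplicative.ofAdd.injective <| by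
    rw [← titsHom_wordProd_left, ← titsHom_wordProd_left, h]

end Tits

theorem simple_mem_leftInvSeq_of_isLeftDescent {ω : List B} {i : B}
    (h : cs.IsLeftDescent (π ω) i) : s i ∈ cs.leftInvSeq ω := by
  classical
  obtain ⟨ρ, hρ, hρω⟩ := cs.exists_isReduced (s i * π ω)
  have hρ_not_mem : s i ∉ cs.leftInvSeq ρ := fun hmem => by
    have := (cs.isLeftInversion_of_mem_leftInvSeq hρ hmem).2
    rw [← hρω, cs.simple_mul_simple_cancel_left] at this
    exact lt_asymm h this
  have hodd : ((cs.leftInvSeq ω).count (s i) : ZMod 2) = 1 := by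
    rw [cs.count_leftInvSeq_eq_of_wordProd_eq (ω' := i :: ρ)
        (by rw [cs.wordProd_cons, ← hρω, cs.simple_mul_simple_cancel_left]),
      count_leftInvSeq_cons, cs.simple_mul_simple_self, one_mul,
      List.count_eq_zero_of_not_mem hρ_not_mem, if_pos rfl]
    simp
  by_contra h_not_mem
  rw [List.count_eq_zero_of_not_mem h_not_mem] at hodd
  simp at hodd

theorem simple_mem_rightInvSeq_of_isRightDescent {ω : List B} {i : B}
    (h : cs.IsRightDescent (π ω) i) : s i ∈ cs.rightInvSeq ω := by
  have : cs.IsLeftDescent (π ω.reverse) i := by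
    rwa [cs.wordProd_reverse, cs.isLeftDescent_inv_iff]
  simpa [cs.leftInvSeq_reverse] using cs.simple_mem_leftInvSeq_of_isLeftDescent this

theorem exists_eraseIdx_of_isLeftDescent {ω : List B} {i : B}
    (h : cs.IsLeftDescent (π ω) i) : ∃ j < ω.length, s i * π ω = π (ω.eraseIdx j) := by
  obtain ⟨j, hj, hval⟩ := List.getElem_of_mem (cs.simple_mem_leftInvSeq_of_isLeftDescent h)
  refine ⟨j, by simpa using hj, ?_⟩
  rw [← cs.getD_leftInvSeq_mul_wordProd, List.getD_eq_getElem _ _ hj, hval]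

theorem exists_eraseIdx_of_isRightDescent {ω : List B} {i : B}
    (h : cs.IsRightDescent (π ω) i) : ∃ j < ω.length, π ω * s i = π (ω.eraseIdx j) := by
  obtain ⟨j, hj, hval⟩ := List.getElem_of_mem (cs.simple_mem_rightInvSeq_of_isRightDescent h)
  refine ⟨j, by simpa using hj, ?_⟩
  rw [← cs.wordProd_mul_getD_rightInvSeq, List.getD_eq_getElem _ _ hj, hval]

theorem length_wordProd_eraseIdx_lt {ω : List B} {j : ℕ} (hj : j < ω.length) :
    ℓ (π (ω.eraseIdx j)) < ω.length :=
  (cs.length_wordProd_le _).trans_lt (by rw [List.length_eraseIdx_of_lt hj]; omega)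

section Parabolic

variable {P : Set B}

theorem simple_mem_parabolic {i : B} (hi : i ∈ P) : s i ∈ cs.parabolic P :=
  Subgroup.subset_closure ⟨i, hi, rfl⟩

theorem wordProd_mem_parabolic {ω : List B} (hω : ∀ i ∈ ω, i ∈ P) : π ω ∈ cs.parabolic P :=
  (cs.parabolic P).list_prod_mem (by simpa using fun i hi => cs.simple_mem_parabolic (hω i hi))

theorem exists_isReduced_simple_mul {ω : List B} (hω : cs.IsReduced ω) (hωP : ∀ i ∈ ω, i ∈ P)
    {i : B} (hi : i ∈ P) :
    ∃ ω' : List B, cs.IsReduced ω' ∧ (∀ i ∈ ω', i ∈ P) ∧ π ω' = s i * π ω := by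
  rcases cs.length_simple_mul (π ω) i with hup | hdown
  · refine ⟨i :: ω, ?_, by simpa [hi] using hωP, cs.wordProd_cons i ω⟩
    rw [IsReduced, cs.wordProd_cons, hup, hω.eq, List.length_cons]
  · obtain ⟨j, hj, hexch⟩ := cs.exists_eraseIdx_of_isLeftDescent (ω := ω) (i := i) (by
      rw [IsLeftDescent]; omega)
    refine ⟨ω.eraseIdx j, ?_, fun k hk => hωP k ((List.eraseIdx_sublist ω j).subset hk),
      hexch.symm⟩
    rw [IsReduced, ← hexch, List.length_eraseIdx_of_lt hj, ← hω.eq]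
    omega

theorem exists_isReduced_of_mem_parabolic {w : W} (hw : w ∈ cs.parabolic P) :
    ∃ ω : List B, cs.IsReduced ω ∧ (∀ i ∈ ω, i ∈ P) ∧ π ω = w := by
  induction hw using Subgroup.closure_induction_left with
  | one => exact ⟨[], by simp [IsReduced], by simp, rfl⟩
  | mul_left x hx y _ ih =>
    obtain ⟨i, hi, rfl⟩ := hx
    obtain ⟨ω, hω, hωP, rfl⟩ := ih
    exact cs.exists_isReduced_simple_mul hω hωP hi
  | inv_mul_cancel x hx y _ ih =>
    obtain ⟨i, hi, rfl⟩ := hx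
    obtain ⟨ω, hω, hωP, rfl⟩ := ih
    rw [cs.inv_simple]
    exact cs.exists_isReduced_simple_mul hω hωP hi

@[elab_as_elim]
theorem parabolic_induction_right {p : ∀ b, b ∈ cs.parabolic P → Prop} (one : p 1 (one_mem _))
    (mul_simple : ∀ b hb, ∀ k (hk : k ∈ P), ℓ (b * s k) = ℓ b + 1 → p b hb →
      p (b * s k) (mul_mem hb (cs.simple_mem_parabolic hk)))
    {b : W} (hb : b ∈ cs.parabolic P) : p b hb := by
  obtain ⟨ω, hω, hωP, rfl⟩ := cs.exists_isReduced_of_mem_parabolic hb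
  induction ω using List.reverseRecOn with
  | nil => exact one
  | append_singleton ω k ih =>
    have hωP' : ∀ i ∈ ω, i ∈ P := fun i hi => hωP i (by simp [hi])
    have hω' : cs.IsReduced ω := by simpa using hω.take ω.length
    have hlen := hω.eq
    rw [cs.wordProd_append, cs.wordProd_singleton, List.length_append, List.length_singleton,
      ← hω'.eq] at hlen
    simp only [cs.wordProd_append, cs.wordProd_singleton]
    exact mul_simple _ (cs.wordProd_mem_parabolic hωP') k (hωP k (by simp)) hlen
      (ih hω' hωP' _)

theorem exists_isRightDescent_of_mem_parabolic {b : W} (hb : b ∈ cs.parabolic P) (hne : b ≠ 1) :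
    ∃ k ∈ P, cs.IsRightDescent b k := by
  induction hb using cs.parabolic_induction_right with
  | one => exact absurd rfl hne
  | mul_simple b _ k hk hlen _ =>
    refine ⟨k, hk, ?_⟩
    rw [IsRightDescent, cs.simple_mul_simple_cancel_right, hlen]
    omega

theorem exists_min_length_mul (u : W) (H : Subgroup W) :
    ∃ b ∈ H, ∀ c ∈ H, ℓ (u * b) ≤ ℓ (u * c) := by
  obtain ⟨b, hb, hmin⟩ :=
    (InvImage.wf (fun b => ℓ (u * b)) wellFounded_lt).has_min (H : Set W) ⟨1, H.one_mem⟩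
  exact ⟨b, hb, fun c hc => not_lt.mp (hmin c hc)⟩

theorem length_mul_eq_add_of_isMin {u : W} (hmin : ∀ c ∈ cs.parabolic P, ℓ u ≤ ℓ (u * c))
    {b : W} (hb : b ∈ cs.parabolic P) : ℓ (u * b) = ℓ u + ℓ b := by
  induction hb using cs.parabolic_induction_right with
  | one => simp
  | mul_simple b hb k hk hlen ih =>
    rw [hlen, ← add_assoc, ← ih, ← mul_assoc]
    refine (cs.length_mul_simple (u * b) k).resolve_right fun hdesc => ?_
    obtain ⟨σ, hσ, rfl⟩ := cs.exists_isReduced u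
    obtain ⟨τ, hτ, rfl⟩ := cs.exists_isReduced b
    obtain ⟨j, hj, hexch⟩ := cs.exists_eraseIdx_of_isRightDescent (ω := σ ++ τ) (i := k)
      (by rw [IsRightDescent, wordProd_append]; omega)
    rw [wordProd_append] at hexch
    rcases lt_or_ge j σ.length with hjσ | hjσ
    · -- the deleted letter lies in `σ`: then `u * (b * s k * b⁻¹)` is shorter than `u`
      rw [List.eraseIdx_append_of_lt_length hjσ, wordProd_append] at hexch
      have hshort := cs.length_wordProd_eraseIdx_lt hjσ
      have := hmin (π τ * s k * (π τ)⁻¹)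
        (mul_mem (mul_mem hb (cs.simple_mem_parabolic hk)) (inv_mem hb))
      rw [show π σ * (π τ * s k * (π τ)⁻¹) = π (σ.eraseIdx j) by
        rw [← mul_assoc, ← mul_assoc, hexch, mul_inv_cancel_right], hσ.eq] at this
      omega
    · rw [List.eraseIdx_append_of_length_le hjσ, wordProd_append, mul_assoc] at hexch
      have hshort := cs.length_wordProd_eraseIdx_lt (ω := τ) (j := j - σ.length)
        (by simp only [List.length_append] at hj; omega)
      rw [← mul_left_cancel hexch, hlen, hτ.eq] at hshort
      omega

theorem length_mul_eq_add_of_forall_not_isRightDescent {u : W}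
    (hu : ∀ k ∈ P, ¬cs.IsRightDescent u k) {b : W} (hb : b ∈ cs.parabolic P) :
    ℓ (u * b) = ℓ u + ℓ b := by
  obtain ⟨b₀, hb₀, hmin⟩ := cs.exists_min_length_mul u (cs.parabolic P)
  have hadd : ∀ c ∈ cs.parabolic P, ℓ (u * b₀ * c) = ℓ (u * b₀) + ℓ c := fun c hc =>
    cs.length_mul_eq_add_of_isMin
      (fun c hc => by rw [mul_assoc]; exact hmin _ (mul_mem hb₀ hc)) hc
  -- a right descent of `b₀⁻¹` in `P` would be one of `u = (u * b₀) * b₀⁻¹`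
  obtain rfl : b₀ = 1 := by
    by_contra hne
    obtain ⟨k, hk, hdesc⟩ :=
      cs.exists_isRightDescent_of_mem_parabolic (inv_mem hb₀) (inv_ne_one.mpr hne)
    apply hu k hk
    have h1 := hadd _ (mul_mem (inv_mem hb₀) (cs.simple_mem_parabolic hk))
    have h2 := hadd _ (inv_mem hb₀)
    simp only [← mul_assoc, mul_inv_cancel_right] at h1 h2
    rw [IsRightDescent] at hdesc ⊢
    omega
  simpa using hadd b hb

theorem length_mul_eq_add_of_forall_not_isLeftDescent {u : W}
    (hu : ∀ j ∈ P, ¬cs.IsLeftDescent u j) {a : W} (ha : a ∈ cs.parabolic P) :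
    ℓ (a * u) = ℓ a + ℓ u := by
  have := cs.length_mul_eq_add_of_forall_not_isRightDescent (u := u⁻¹)
    (fun j hj h => hu j hj (cs.isRightDescent_inv_iff.mp h)) (inv_mem ha)
  rwa [← mul_inv_rev, cs.length_inv, cs.length_inv, cs.length_inv, add_comm] at this

end Parabolic

theorem length_mul_mul_le (a w b : W) : ℓ (a * w * b) ≤ ℓ a + ℓ w + ℓ b :=
  (cs.length_mul_le _ _).trans (Nat.add_le_add_right (cs.length_mul_le _ _) _)

/-- Deodhar's lemma. -/
theorem simple_mul_eq_mul_simple_of_isRightDescent {u : W} {j k : B}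
    (hj : ¬cs.IsLeftDescent u j) (hk : ¬cs.IsRightDescent u k)
    (h : cs.IsRightDescent (s j * u) k) : s j * u = u * s k := by
  rw [cs.not_isLeftDescent_iff] at hj
  rw [cs.not_isRightDescent_iff] at hk
  rw [cs.isRightDescent_iff] at h
  obtain ⟨σ, hσ, rfl⟩ := cs.exists_isReduced u
  obtain ⟨j₀, hj₀, hexch⟩ := cs.exists_eraseIdx_of_isLeftDescent (ω := σ ++ [k]) (i := j)
    (by rw [IsLeftDescent, wordProd_append, wordProd_singleton, ← mul_assoc]; omega)
  rw [wordProd_append, wordProd_singleton] at hexch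
  rcases lt_or_ge j₀ σ.length with hj₀σ | hj₀σ
  · rw [List.eraseIdx_append_of_lt_length hj₀σ, wordProd_append, wordProd_singleton,
      ← mul_assoc] at hexch
    have hshort := cs.length_wordProd_eraseIdx_lt hj₀σ
    rw [← mul_right_cancel hexch, hj, hσ.eq] at hshort
    omega
  · obtain rfl : j₀ = σ.length := by
      simp only [List.length_append, List.length_singleton] at hj₀
      omega
    rw [List.eraseIdx_append_of_length_le le_rfl, Nat.sub_self, List.eraseIdx_cons_zero,
      List.append_nil] at hexch
    nth_rewrite 2 [← hexch]
    rw [← mul_assoc, cs.simple_mul_simple_cancel_right]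

section DoubleCoset

variable {J K : Set B}

theorem eq_of_mem_doubleCoset_of_forall_not_isDescent {u v : W}
    (huJ : ∀ j ∈ J, ¬cs.IsLeftDescent u j) (huK : ∀ k ∈ K, ¬cs.IsRightDescent u k)
    (hvJ : ∀ j ∈ J, ¬cs.IsLeftDescent v j) (hvK : ∀ k ∈ K, ¬cs.IsRightDescent v k)
    (h : v ∈ doubleCoset u (cs.parabolic J) (cs.parabolic K)) : u = v := by
  rw [mem_doubleCoset] at h
  obtain ⟨a, ha, b, hb, hv⟩ := h
  induction ha using cs.parabolic_induction_right generalizing u b with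
  | one =>
    rw [one_mul] at hv
    have h1 := cs.length_mul_eq_add_of_forall_not_isRightDescent huK hb
    have h2 := cs.length_mul_eq_add_of_forall_not_isRightDescent hvK (inv_mem hb)
    rw [hv, mul_inv_cancel_right, cs.length_inv] at h2
    rw [hv, cs.length_eq_zero_iff.mp (show ℓ b = 0 by omega), mul_one]
  | mul_simple a ha j hj hlen ih =>
    by_cases hdesc : ∃ k ∈ K, cs.IsRightDescent (s j * u) k
    · obtain ⟨k, hk, hdesc⟩ := hdesc
      refine ih huJ huK _ (mul_mem (cs.simple_mem_parabolic hk) hb) ?_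
      rw [hv, mul_assoc a,
        cs.simple_mul_eq_mul_simple_of_isRightDescent (huJ j hj) (huK k hk) hdesc]
      group
    · -- otherwise `s j * u * b = a⁻¹ * v` would be longer than `ℓ a + ℓ v` allows
      push Not at hdesc
      exfalso
      have hsu := (cs.not_isLeftDescent_iff).mp (huJ j hj)
      have h1 := cs.length_mul_eq_add_of_forall_not_isRightDescent hdesc hb
      have h2 := cs.length_mul_eq_add_of_forall_not_isLeftDescent hvJ
        (inv_mem (mul_mem ha (cs.simple_mem_parabolic hj)))
      rw [cs.length_inv, hlen, show (a * s j)⁻¹ * v = u * b by rw [hv]; group,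
        cs.length_mul_eq_add_of_forall_not_isRightDescent huK hb] at h2
      have h3 : ℓ (s j * u * b) ≤ ℓ a + ℓ v := by
        rw [show s j * u * b = a⁻¹ * v by rw [hv]; group, ← cs.length_inv a]
        exact cs.length_mul_le _ _
      omega

theorem forall_not_isLeftDescent_of_isMin {w₀ : W}
    (hmin : ∀ v ∈ doubleCoset w₀ (cs.parabolic J) (cs.parabolic K), ℓ w₀ ≤ ℓ v) :
    ∀ j ∈ J, ¬cs.IsLeftDescent w₀ j := fun _ hj hdesc =>
  (hmin _ (mul_mem_doubleCoset_of_mem_left (cs.simple_mem_parabolic hj)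
    (mem_doubleCoset_self _ _ w₀))).not_gt hdesc

theorem forall_not_isRightDescent_of_isMin {w₀ : W}
    (hmin : ∀ v ∈ doubleCoset w₀ (cs.parabolic J) (cs.parabolic K), ℓ w₀ ≤ ℓ v) :
    ∀ k ∈ K, ¬cs.IsRightDescent w₀ k := fun _ hk hdesc =>
  (hmin _ (mul_mem_doubleCoset_of_mem_right (cs.simple_mem_parabolic hk)
    (mem_doubleCoset_self _ _ w₀))).not_gt hdesc

theorem exists_eq_mul_mul_of_forall_not_isDescent {w₀ : W}
    (hJ : ∀ j ∈ J, ¬cs.IsLeftDescent w₀ j) (hK : ∀ k ∈ K, ¬cs.IsRightDescent w₀ k)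
    {u : W} (hu : u ∈ doubleCoset w₀ (cs.parabolic J) (cs.parabolic K)) :
    ∃ α ∈ cs.parabolic J, ∃ β ∈ cs.parabolic K, u = α * w₀ * β ∧ ℓ u = ℓ α + ℓ w₀ + ℓ β := by
  induction hn : ℓ u using Nat.strong_induction_on generalizing u with
  | _ n ih =>
  subst hn
  by_cases huJ : ∃ j ∈ J, cs.IsLeftDescent u j
  · obtain ⟨j, hj, hdesc⟩ := huJ
    have hlen := cs.isLeftDescent_iff.mp hdesc
    obtain ⟨α, hα, β, hβ, hsu, hlen'⟩ := ih _ (by omega)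
      (mul_mem_doubleCoset_of_mem_left (cs.simple_mem_parabolic hj) hu) rfl
    have hu' : u = s j * α * w₀ * β := by
      rw [← cs.simple_mul_simple_cancel_left (w := u) j, hsu]
      simp only [mul_assoc]
    refine ⟨s j * α, mul_mem (cs.simple_mem_parabolic hj) hα, β, hβ, hu', ?_⟩
    refine le_antisymm (hu' ▸ cs.length_mul_mul_le _ _ _) ?_
    have := cs.length_mul_le (s j) α
    rw [cs.length_simple] at this
    omega
  by_cases huK : ∃ k ∈ K, cs.IsRightDescent u k
  · obtain ⟨k, hk, hdesc⟩ := huK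
    have hlen := cs.isRightDescent_iff.mp hdesc
    obtain ⟨α, hα, β, hβ, hus, hlen'⟩ := ih _ (by omega)
      (mul_mem_doubleCoset_of_mem_right (cs.simple_mem_parabolic hk) hu) rfl
    have hu' : u = α * w₀ * (β * s k) := by
      rw [← cs.simple_mul_simple_cancel_right (w := u) k, hus]
      simp only [mul_assoc]
    refine ⟨α, hα, β * s k, mul_mem hβ (cs.simple_mem_parabolic hk), hu', ?_⟩
    refine le_antisymm (hu' ▸ cs.length_mul_mul_le _ _ _) ?_
    have := cs.length_mul_le β (s k)
    rw [cs.length_simple] at this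
    omega
  push Not at huJ huK
  obtain rfl := cs.eq_of_mem_doubleCoset_of_forall_not_isDescent hJ hK huJ huK hu
  exact ⟨1, one_mem _, 1, one_mem _, by simp, by simp⟩

end DoubleCoset

end CoxeterSystem

/-- If `w₀` is the minimal-length element of a double coset `W_J · w · W_K`, then every
element `u` of this double coset can be written as `u = α · w₀ · β` with `α ∈ W_J`,
`β ∈ W_K` and `l(u) = l(α) + l(w₀) + l(β)`. -/
theorem double_coset_reduced_decomposition
    {B W : Type*} [Group W] {M : CoxeterMatrix B} (cs : CoxeterSystem M W)
    (J K : Set B) (w w₀ : W)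
    (hw₀ : ∃ a ∈ cs.parabolic J, ∃ b ∈ cs.parabolic K, w₀ = a * w * b)
    (hmin : ∀ v : W, (∃ a ∈ cs.parabolic J, ∃ b ∈ cs.parabolic K, v = a * w * b) →
      cs.length w₀ ≤ cs.length v) :
    ∀ u : W, (∃ a ∈ cs.parabolic J, ∃ b ∈ cs.parabolic K, u = a * w * b) →
      ∃ α ∈ cs.parabolic J, ∃ β ∈ cs.parabolic K,
        u = α * w₀ * β ∧ cs.length u = cs.length α + cs.length w₀ + cs.length β := by
  intro u hu
  have hD : doubleCoset w₀ (cs.parabolic J) (cs.parabolic K)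
      = doubleCoset w (cs.parabolic J) (cs.parabolic K) :=
    doubleCoset_eq_of_mem (mem_doubleCoset.mpr hw₀)
  have hmin' :
      ∀ v ∈ doubleCoset w₀ (cs.parabolic J) (cs.parabolic K), cs.length w₀ ≤ cs.length v :=
    fun v hv => hmin v (mem_doubleCoset.mp (hD ▸ hv))
  exact cs.exists_eq_mul_mul_of_forall_not_isDescent (cs.forall_not_isLeftDescent_of_isMin hmin')
    (cs.forall_not_isRightDescent_of_isMin hmin') (hD ▸ mem_doubleCoset.mpr hu)
end

section
/- The Tits cone Y = W · C of a Coxeter group acting on the dual of its Cartan algebra is a convex cone; in particular, Y is closed under addition and under multiplication by nonnegative scalars. -/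
/-- The data of the standard representation of a Kac–Moody Weyl group attached to a
(symmetrizable or not) generalized Cartan matrix: a real vector space `V` (playing the
role of `𝔥ℝ*`), simple roots `α i ∈ V`, coroot functionals `λ ↦ λ(h i)`, such that the
matrix `a i j = (α j)(h i)` is a generalized Cartan matrix. -/
structure GCMRep (I V : Type*) [AddCommGroup V] [Module ℝ V] where
  /-- the simple roots `α i ∈ 𝔥ℝ*` -/
  α : I → V
  /-- evaluation against the simple coroots: `coroot i λ = λ(h i)` -/
  coroot : I → V →ₗ[ℝ] ℝ
  indep : LinearIndependent ℝ α
  indepCoroot : LinearIndependent ℝ coroot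
  diag : ∀ i, coroot i (α i) = 2
  offdiag_nonpos : ∀ i j, i ≠ j → coroot i (α j) ≤ 0
  integral : ∀ i j, ∃ n : ℤ, coroot i (α j) = (n : ℝ)
  symm_zero : ∀ i j, coroot i (α j) = 0 → coroot j (α i) = 0

namespace GCMRep

variable {I V : Type*} [AddCommGroup V] [Module ℝ V] (s : GCMRep I V)

/-- The simple reflection `r i : λ ↦ λ - λ(h i) • α i` as a linear endomorphism. -/
def reflMap (i : I) : V →ₗ[ℝ] V :=
  LinearMap.id - LinearMap.smulRight (s.coroot i) (s.α i)

lemma reflMap_involutive (i : I) : Function.Involutive (s.reflMap i) := by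
  intro v
  have h2 := s.diag i
  simp only [reflMap, LinearMap.sub_apply, LinearMap.id_apply, LinearMap.smulRight_apply,
    map_sub, map_smul, smul_eq_mul, h2]
  module

/-- The simple reflection `r i` as a linear automorphism of `V`. -/
def reflE (i : I) : V ≃ₗ[ℝ] V :=
  LinearEquiv.ofInvolutive (s.reflMap i) (s.reflMap_involutive i)

/-- The Weyl group `W(A)` as the group of linear automorphisms of `V = 𝔥ℝ*` generated by
the simple reflections. -/
def weyl : Subgroup (V ≃ₗ[ℝ] V) :=
  Subgroup.closure (Set.range s.reflE)

/-- The (closed) dominant Weyl chamber `C = { λ : λ(h i) ≥ 0 for all i }`. -/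
def domChamber : Set V := {x | ∀ i, 0 ≤ s.coroot i x}

/-- The Tits cone `Y = W · C`. -/
def titsCone : Set V := {y | ∃ w ∈ s.weyl, ∃ x ∈ s.domChamber, y = w x}

end GCMRep

/-!
The Weyl group is the Coxeter group whose Coxeter matrix is read off from the products
`a i j * a j i`; it acts on `V` and, contragrediently, on coordinates of coroots. Tits' rank-two
reduction, with the dihedral case computed by Chebyshev polynomials, shows that every real
coroot `w (h i)` is a nonnegative or a nonpositive combination of the simple coroots. Hence `r i`
permutes the positive real coroots other than `h i`, and this gives the characterization:
`λ` lies in the Tits cone iff only finitely many positive real coroots are negative on `λ`.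
That condition is visibly stable under sums and nonnegative multiples.
-/

open Module Polynomial.Chebyshev
open scoped Matrix

noncomputable section

namespace Module

variable {R M : Type*} [CommRing R] [AddCommGroup M] [Module R M] {x y : M} {f g : Dual R M}

lemma reflection_mul_reflection_sq_eq_one (hf : f x = 2) (hg : g y = 2) (h₁ : f y = 0)
    (h₂ : g x = 0) : (reflection hf * reflection hg) ^ 2 = 1 := by
  ext z
  simp [pow_two, reflection_apply, hf, hg, h₁, h₂]
  module

lemma reflection_mul_reflection_pow_three_eq_one (hf : f x = 2) (hg : g y = 2)
    (h : f y * g x = 1) : (reflection hf * reflection hg) ^ 3 = 1 := by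
  ext z
  rw [reflection_mul_reflection_pow_apply hf hg 3 z (-1) (by rw [h]; norm_num)]
  norm_num [S_zero, S_one, S_neg_one]

lemma reflection_mul_reflection_pow_four_eq_one (hf : f x = 2) (hg : g y = 2)
    (h : f y * g x = 2) : (reflection hf * reflection hg) ^ 4 = 1 := by
  ext z
  rw [reflection_mul_reflection_pow_apply hf hg 4 z 0 (by rw [h]; norm_num)]
  norm_num [S_zero, S_one, S_neg_one]

lemma reflection_mul_reflection_pow_six_eq_one (hf : f x = 2) (hg : g y = 2)
    (h : f y * g x = 3) : (reflection hf * reflection hg) ^ 6 = 1 := by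
  ext z
  rw [reflection_mul_reflection_pow_apply hf hg 6 z 1 (by rw [h]; norm_num)]
  norm_num [S_zero, S_one, S_neg_one, S_two]

end Module

namespace Polynomial.Chebyshev

lemma S_eval_nonneg_of_two_le {t : ℝ} (ht : 2 ≤ t) {n : ℤ} (hn : -1 ≤ n) :
    0 ≤ (S ℝ n).eval t := by
  have key : ∀ k : ℕ, 0 ≤ (S ℝ (k - 1)).eval t ∧ (S ℝ (k - 1)).eval t ≤ (S ℝ k).eval t := by
    intro k
    induction k with
    | zero => norm_num [S_neg_one, S_zero]
    | succ k ih =>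
      have hrec : (S ℝ ((k : ℤ) + 1)).eval t = t * (S ℝ k).eval t - (S ℝ (k - 1)).eval t := by
        simp [S_add_one]
      push_cast
      simp only [add_sub_cancel_right, hrec]
      constructor <;> nlinarith
  obtain ⟨k, rfl⟩ : ∃ k : ℕ, n = k - 1 := ⟨(n + 1).toNat, by omega⟩
  exact (key k).1

end Polynomial.Chebyshev

/-- The order of `r₁ r₂` for reflections `r₁, r₂` whose Cartan integers have product `p`;
`0` stands for infinite order. -/
def coxeterEntry (p : ℝ) : ℕ :=
  if p = 0 then 2 else if p = 1 then 3 else if p = 2 then 4 else if p = 3 then 6 else 0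

lemma coxeterEntry_ne_one (p : ℝ) : coxeterEntry p ≠ 1 := by
  unfold coxeterEntry; split_ifs <;> simp

lemma S_eval_nonneg_of_le_coxeterEntry {p : ℝ} (hp : p ∈ ({0, 1, 2, 3} : Set ℝ) ∨ 4 ≤ p)
    {n : ℤ} (hn : -1 ≤ n) (hm : coxeterEntry p = 0 ∨ 2 * n + 2 ≤ coxeterEntry p) :
    0 ≤ (S ℝ n).eval (p - 2) := by
  rcases hp with hp | hp
  · simp only [Set.mem_insert_iff, Set.mem_singleton_iff] at hp
    rcases hp with rfl | rfl | rfl | rfl <;>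
    · norm_num [coxeterEntry] at hm
      have : n ≤ 2 := by omega
      interval_cases n <;> first | omega | norm_num [S_neg_one, S_zero, S_one, S_two]
  · exact S_eval_nonneg_of_two_le (by linarith) hn

lemma S_eval_add_S_eval_sub_one_nonneg_of_lt_coxeterEntry {p : ℝ}
    (hp : p ∈ ({0, 1, 2, 3} : Set ℝ) ∨ 4 ≤ p) {n : ℤ} (hn : 0 ≤ n)
    (hm : coxeterEntry p = 0 ∨ 2 * n + 1 ≤ coxeterEntry p) :
    0 ≤ (S ℝ n).eval (p - 2) + (S ℝ (n - 1)).eval (p - 2) := by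
  rcases hp with hp | hp
  · simp only [Set.mem_insert_iff, Set.mem_singleton_iff] at hp
    rcases hp with rfl | rfl | rfl | rfl <;>
    · norm_num [coxeterEntry] at hm
      have : n ≤ 2 := by omega
      interval_cases n <;> first | omega | norm_num [S_neg_one, S_zero, S_one, S_two]
  · exact add_nonneg (S_eval_nonneg_of_two_le (by linarith) (by omega))
      (S_eval_nonneg_of_two_le (by linarith) (by omega))

namespace CoxeterMatrix

variable {B : Type*}

open scoped Classical in
def ofCartan (a : Matrix B B ℝ) : CoxeterMatrix B where
  M := .of fun i j => if i = j then 1 else coxeterEntry (a i j * a j i)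
  isSymm := by
    ext i j
    simp only [Matrix.transpose_apply, Matrix.of_apply, eq_comm (a := i), mul_comm (a i j)]
  diagonal i := by simp
  off_diagonal i j h := by simpa [h] using coxeterEntry_ne_one _

lemma ofCartan_apply_of_ne (a : Matrix B B ℝ) {i j : B} (h : i ≠ j) :
    ofCartan a i j = coxeterEntry (a i j * a j i) := by
  simp [ofCartan, h]

lemma ofCartan_transpose (a : Matrix B B ℝ) : ofCartan aᵀ = ofCartan a := by
  ext i j
  obtain rfl | h := eq_or_ne i j
  · simp
  · simp only [ofCartan_apply_of_ne _ h, Matrix.transpose_apply, mul_comm]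

lemma isLiftable_ofCartan_reflection {M : Type*} [AddCommGroup M] [Module ℝ M]
    (x : B → M) (f : B → Dual ℝ M) (hf : ∀ i, f i (x i) = 2)
    (hzero : ∀ i j, f i (x j) = 0 → f j (x i) = 0) :
    (ofCartan (.of fun i j => f i (x j))).IsLiftable fun i => reflection (hf i) := by
  intro i j
  obtain rfl | hij := eq_or_ne i j
  · rw [CoxeterMatrix.diagonal, pow_one]
    exact LinearEquiv.ext (involutive_reflection (hf i))
  rw [ofCartan_apply_of_ne _ hij]
  simp only [Matrix.of_apply]
  unfold coxeterEntry
  split_ifs with h₀ h₁ h₂ h₃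
  · have hij₀ : f i (x j) = 0 := (mul_eq_zero.mp h₀).elim id (hzero j i)
    exact reflection_mul_reflection_sq_eq_one _ _ hij₀ (hzero i j hij₀)
  · exact reflection_mul_reflection_pow_three_eq_one _ _ h₁
  · exact reflection_mul_reflection_pow_four_eq_one _ _ h₂
  · exact reflection_mul_reflection_pow_six_eq_one _ _ h₃
  · exact pow_zero _

end CoxeterMatrix

namespace CoxeterSystem

variable {B W : Type*} [Group W] {M : CoxeterMatrix B} (cs : CoxeterSystem M W)

theorem exists_eq_mul_wordProd_alternatingWord {w : W} {i j : B} (hj : cs.IsRightDescent w j) :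
    ∃ v q, 0 < q ∧ w = v * cs.wordProd (alternatingWord i j q) ∧
      cs.length w = cs.length v + q ∧ ¬cs.IsRightDescent v i ∧ ¬cs.IsRightDescent v j := by
  induction hn : cs.length w using Nat.strong_induction_on generalizing w i j with
  | _ n ih =>
  have hlen : cs.length (w * cs.simple j) + 1 = cs.length w := cs.isRightDescent_iff.mp hj
  have hj' : ¬cs.IsRightDescent (w * cs.simple j) j :=
    cs.isRightDescent_iff_not_isRightDescent_mul.mp hj
  have hw : w = w * cs.simple j * cs.simple j := (cs.simple_mul_simple_cancel_right j).symm
  by_cases hi : cs.IsRightDescent (w * cs.simple j) i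
  · obtain ⟨v, q, -, hv, hlen', hvj, hvi⟩ := ih _ (by omega) hi rfl
    refine ⟨v, q + 1, q.succ_pos, ?_, by omega, hvi, hvj⟩
    rw [hw, hv, mul_assoc, ← cs.wordProd_concat, ← alternatingWord_succ]
  · exact ⟨w * cs.simple j, 1, one_pos, by simp [alternatingWord], by omega, hi, hj'⟩

theorem eq_zero_or_lt_of_eq_mul_wordProd_alternatingWord {w v : W} {i j : B} {q : ℕ}
    (hw : w = v * cs.wordProd (alternatingWord i j q)) (hlen : cs.length w = cs.length v + q)
    (hi : ¬cs.IsRightDescent w i) : M i j = 0 ∨ q < M i j := by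
  by_contra! h
  have hws : w * cs.simple i = v * cs.wordProd (alternatingWord j i (q + 1)) := by
    rw [hw, mul_assoc, ← cs.wordProd_concat, ← alternatingWord_succ]
  have hred : cs.IsReduced (alternatingWord j i (q + 1)) := by
    have h₁ := cs.not_isRightDescent_iff.mp hi
    have h₂ := cs.length_mul_le v (cs.wordProd (alternatingWord j i (q + 1)))
    have h₃ := cs.length_wordProd_le (alternatingWord j i (q + 1))
    rw [length_alternatingWord] at h₃
    rw [← hws] at h₂
    unfold IsReduced
    rw [length_alternatingWord]
    omega
  exact cs.not_isReduced_alternatingWord j i (by rw [M.symmetric]; exact h.1)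
    (by rw [M.symmetric]; omega) hred

end CoxeterSystem

namespace GCMRep

variable {I V : Type*} [AddCommGroup V] [Module ℝ V] (s : GCMRep I V)

/-- The generalized Cartan matrix `a i j = α j (h i)`. -/
def cartan : Matrix I I ℝ := .of fun i j => s.coroot i (s.α j)

lemma cartan_mem_bot (i j : I) : s.cartan i j ∈ (⊥ : Subring ℝ) := by
  obtain ⟨n, hn⟩ := s.integral i j
  exact Subring.mem_bot.mpr ⟨n, hn.symm⟩

lemma cartan_mul_cartan_mem {i j : I} (hij : i ≠ j) :
    s.cartan i j * s.cartan j i ∈ ({0, 1, 2, 3} : Set ℝ) ∨ 4 ≤ s.cartan i j * s.cartan j i := by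
  obtain ⟨a, ha⟩ := s.integral i j
  obtain ⟨b, hb⟩ := s.integral j i
  have ha₀ : a ≤ 0 := by exact_mod_cast ha ▸ s.offdiag_nonpos i j hij
  have hb₀ : b ≤ 0 := by exact_mod_cast hb ▸ s.offdiag_nonpos j i hij.symm
  have hab : 0 ≤ a * b := mul_nonneg_of_nonpos_of_nonpos ha₀ hb₀
  simp only [cartan, Matrix.of_apply, ha, hb, Set.mem_insert_iff, Set.mem_singleton_iff]
  norm_cast
  omega

def cox : CoxeterMatrix I := .ofCartan s.cartan

abbrev cs : CoxeterSystem s.cox s.cox.Group := s.cox.toCoxeterSystem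

lemma reflE_eq_reflection (i : I) : s.reflE i = reflection (s.diag i) := rfl

lemma coroot_reflE_self (i : I) (v : V) : s.coroot i (s.reflE i v) = -s.coroot i v := by
  rw [reflE_eq_reflection, reflection_apply, map_sub, map_smul, s.diag i, smul_eq_mul]
  ring

lemma isLiftable_reflE : s.cox.IsLiftable s.reflE :=
  CoxeterMatrix.isLiftable_ofCartan_reflection s.α s.coroot s.diag s.symm_zero

def weylRep : s.cox.Group →* (V ≃ₗ[ℝ] V) := s.cs.lift ⟨s.reflE, s.isLiftable_reflE⟩

@[simp] lemma weylRep_simple (i : I) : s.weylRep (s.cs.simple i) = s.reflE i :=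
  s.cs.lift_apply_simple _ i

lemma weyl_le_range_weylRep : s.weyl ≤ s.weylRep.range :=
  Subgroup.closure_le _ |>.mpr <| by rintro _ ⟨i, rfl⟩; exact ⟨s.cs.simple i, s.weylRep_simple i⟩

lemma reflE_mem_titsCone {v : V} (hv : v ∈ s.titsCone) (i : I) : s.reflE i v ∈ s.titsCone := by
  obtain ⟨w, hw, x, hx, rfl⟩ := hv
  exact ⟨s.reflE i * w, s.weyl.mul_mem (Subgroup.subset_closure ⟨i, rfl⟩) hw, x, hx, rfl⟩

lemma domChamber_subset_titsCone : s.domChamber ⊆ s.titsCone :=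
  fun x hx => ⟨1, s.weyl.one_mem, x, hx, rfl⟩

section Coroots

variable [Fintype I]

open scoped Classical
open CoxeterSystem (alternatingWord)

/-- Coroots are encoded by their coordinates `x` in the basis `(h i)`: `corootForm i x` is the
value of the root `α i` on `∑ j, x j • h j`. -/
def corootForm (i : I) : Dual ℝ (I → ℝ) := ∑ j, s.cartan j i • LinearMap.proj j

lemma corootForm_apply (i : I) (x : I → ℝ) : s.corootForm i x = ∑ j, s.cartan j i * x j := by
  simp [corootForm]

lemma corootForm_single (i j : I) : s.corootForm i (Pi.single j 1) = s.cartan j i := by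
  simp [corootForm, Pi.single_apply]

lemma corootForm_single_self (i : I) : s.corootForm i (Pi.single i 1) = 2 := by
  rw [corootForm_single]; exact s.diag i

def corootRefl (i : I) : (I → ℝ) ≃ₗ[ℝ] (I → ℝ) := reflection (s.corootForm_single_self i)

lemma corootRefl_apply_of_ne {i k : I} (h : k ≠ i) (x : I → ℝ) : s.corootRefl i x k = x k := by
  simp [corootRefl, reflection_apply, h]

lemma corootRefl_single_self (i : I) : s.corootRefl i (Pi.single i 1) = -Pi.single i 1 :=
  reflection_apply_self _

lemma corootRefl_involutive (i : I) : Function.Involutive (s.corootRefl i) :=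
  involutive_reflection _

lemma isLiftable_corootRefl : s.cox.IsLiftable s.corootRefl := by
  have h := CoxeterMatrix.isLiftable_ofCartan_reflection (fun i => Pi.single i 1) s.corootForm
    s.corootForm_single_self fun i j h => by
      rw [corootForm_single] at h ⊢; exact s.symm_zero j i h
  have hA : (Matrix.of fun i j => s.corootForm i (Pi.single j 1)) = s.cartanᵀ := by
    ext i j; exact s.corootForm_single i j
  rwa [hA, CoxeterMatrix.ofCartan_transpose] at h

def corootRep : s.cox.Group →* ((I → ℝ) ≃ₗ[ℝ] (I → ℝ)) :=
  s.cs.lift ⟨s.corootRefl, s.isLiftable_corootRefl⟩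

@[simp] lemma corootRep_simple (i : I) : s.corootRep (s.cs.simple i) = s.corootRefl i :=
  s.cs.lift_apply_simple _ i

def corootComb : (I → ℝ) →ₗ[ℝ] Dual ℝ V := Fintype.linearCombination ℝ s.coroot

lemma corootComb_apply (x : I → ℝ) (v : V) : s.corootComb x v = ∑ j, x j * s.coroot j v := by
  simp [corootComb, Fintype.linearCombination_apply]

lemma corootComb_single (i : I) : s.corootComb (Pi.single i 1) = s.coroot i := by
  simp [corootComb, Fintype.linearCombination_apply_single]

lemma corootComb_apply_α (x : I → ℝ) (i : I) : s.corootComb x (s.α i) = s.corootForm i x := by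
  simp [corootComb_apply, corootForm, cartan, mul_comm]

lemma corootComb_corootRefl (i : I) (x : I → ℝ) (v : V) :
    s.corootComb (s.corootRefl i x) v = s.corootComb x (s.reflE i v) := by
  simp only [corootRefl, reflE_eq_reflection, reflection_apply, map_sub, map_smul,
    LinearMap.sub_apply, LinearMap.smul_apply, corootComb_single, corootComb_apply_α, smul_eq_mul]
  ring

lemma corootComb_corootRep_weylRep (w : s.cox.Group) (x : I → ℝ) (v : V) :
    s.corootComb (s.corootRep w x) (s.weylRep w v) = s.corootComb x v := by
  induction w using s.cs.simple_induction generalizing x v with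
  | simple i =>
    rw [corootRep_simple, weylRep_simple, corootComb_corootRefl]
    congr 1
    exact s.reflMap_involutive i v
  | one => rfl
  | mul w₁ w₂ h₁ h₂ =>
    simp only [map_mul, LinearEquiv.mul_apply, h₁, h₂]

lemma corootComb_weylRep (w : s.cox.Group) (x : I → ℝ) (v : V) :
    s.corootComb x (s.weylRep w v) = s.corootComb (s.corootRep w⁻¹ x) v := by
  conv_lhs => rw [← s.corootComb_corootRep_weylRep w⁻¹]
  simp [← LinearEquiv.mul_apply]

lemma corootComb_nonneg {x : I → ℝ} (hx : 0 ≤ x) {v : V} (hv : v ∈ s.domChamber) :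
    0 ≤ s.corootComb x v := by
  rw [corootComb_apply]
  exact Finset.sum_nonneg fun j _ => mul_nonneg (hx j) (hv j)

lemma corootRep_mem_bot (w : s.cox.Group) {x : I → ℝ} (hx : ∀ j, x j ∈ (⊥ : Subring ℝ)) (j : I) :
    s.corootRep w x j ∈ (⊥ : Subring ℝ) := by
  induction w using s.cs.simple_induction generalizing x j with
  | simple i =>
    have hform : s.corootForm i x ∈ (⊥ : Subring ℝ) := by
      rw [corootForm_apply]
      exact Subring.sum_mem _ fun k _ => Subring.mul_mem _ (s.cartan_mem_bot k i) (hx k)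
    simp only [corootRep_simple, corootRefl, reflection_apply, Pi.sub_apply, Pi.smul_apply,
      smul_eq_mul]
    refine Subring.sub_mem _ (hx j) (Subring.mul_mem _ hform ?_)
    rw [Pi.single_apply]; split_ifs <;> simp
  | one => exact hx j
  | mul w₁ w₂ h₁ h₂ =>
    rw [map_mul, LinearEquiv.mul_apply]
    exact h₁ (h₂ hx) j

/-- The coefficients are the Chebyshev values `S k (a i j * a j i - 2)` and their neighbours, with
`q = 2 k` or `2 k + 1`; they are nonnegative as long as `q < m i j`. -/
lemma corootRep_alternatingWord_single {i j : I} (hij : i ≠ j) {q : ℕ}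
    (hq : s.cox i j = 0 ∨ q < s.cox i j) :
    ∃ X Y : ℝ, 0 ≤ X ∧ 0 ≤ Y ∧
      s.corootRep (s.cs.wordProd (alternatingWord i j q)) (Pi.single i 1) =
        X • Pi.single i 1 + Y • Pi.single j 1 := by
  set p := s.cartan i j * s.cartan j i
  have hp := s.cartan_mul_cartan_mem hij
  have ht : p - 2 = s.corootForm i (Pi.single j 1) * s.corootForm j (Pi.single i 1) - 2 := by
    rw [corootForm_single, corootForm_single, mul_comm]
  have ha : 0 ≤ -s.corootForm j (Pi.single i 1) := by
    rw [corootForm_single]; exact neg_nonneg.mpr (s.offdiag_nonpos i j hij)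
  rw [cox, CoxeterMatrix.ofCartan_apply_of_ne _ hij] at hq
  rw [s.cs.prod_alternatingWord_eq_mul_pow, map_mul, map_pow, map_mul, corootRep_simple,
    corootRep_simple]
  obtain ⟨k, rfl | rfl⟩ := Nat.even_or_odd' q
  · rw [if_pos (even_two_mul k), Nat.mul_div_cancel_left k two_pos, map_one, one_mul, corootRefl,
      corootRefl, reflection_mul_reflection_pow_apply_self _ _ k (p - 2) ht]
    exact ⟨_, _, S_eval_add_S_eval_sub_one_nonneg_of_lt_coxeterEntry hp (by omega) (by omega),
      mul_nonneg (S_eval_nonneg_of_le_coxeterEntry hp (by omega) (by omega)) ha, rfl⟩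
  · rw [if_neg (Nat.not_even_two_mul_add_one k), show (2 * k + 1) / 2 = k by omega,
      corootRep_simple, corootRefl, corootRefl,
      reflection_mul_reflection_mul_reflection_pow_apply_self _ _ k (p - 2) ht]
    exact ⟨_, _, S_eval_add_S_eval_sub_one_nonneg_of_lt_coxeterEntry hp (by omega) (by omega),
      mul_nonneg (S_eval_nonneg_of_le_coxeterEntry hp (by omega) (by omega)) ha, rfl⟩

/-- Write `w = v * (⋯ r i r j)` with `j` a descent of `w` and neither `i` nor `j` a descent of `v`;
the rank-two case and induction on the length of `v` conclude. -/
theorem corootRep_single_nonneg {w : s.cox.Group} {i : I} (hi : ¬s.cs.IsRightDescent w i) :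
    0 ≤ s.corootRep w (Pi.single i 1) := by
  induction hn : s.cs.length w using Nat.strong_induction_on generalizing w i with
  | _ n ih =>
  obtain rfl | hw := eq_or_ne w 1
  · simp
  obtain ⟨j, hj⟩ := s.cs.exists_rightDescent_of_ne_one hw
  have hij : i ≠ j := by rintro rfl; exact hi hj
  obtain ⟨v, q, hq, rfl, hlen, hvi, hvj⟩ := s.cs.exists_eq_mul_wordProd_alternatingWord (i := i) hj
  obtain ⟨X, Y, hX, hY, hXY⟩ := s.corootRep_alternatingWord_single hij
    (s.cs.eq_zero_or_lt_of_eq_mul_wordProd_alternatingWord rfl hlen hi)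
  rw [map_mul, LinearEquiv.mul_apply, hXY, map_add, map_smul, map_smul]
  exact add_nonneg (smul_nonneg hX (ih _ (by omega) hvi rfl))
    (smul_nonneg hY (ih _ (by omega) hvj rfl))

theorem corootRep_single_nonpos {w : s.cox.Group} {i : I} (hi : s.cs.IsRightDescent w i) :
    s.corootRep w (Pi.single i 1) ≤ 0 := by
  have h := s.corootRep_single_nonneg (s.cs.isRightDescent_iff_not_isRightDescent_mul.mp hi)
  rwa [map_mul, LinearEquiv.mul_apply, corootRep_simple, corootRefl_single_self, map_neg,
    neg_nonneg] at h

def coroots : Set (I → ℝ) := {x | ∃ w k, s.corootRep w (Pi.single k 1) = x}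

def posCoroots : Set (I → ℝ) := {x | x ∈ s.coroots ∧ 0 ≤ x}

lemma nonneg_or_nonpos_of_mem_coroots {x : I → ℝ} (hx : x ∈ s.coroots) : 0 ≤ x ∨ x ≤ 0 := by
  obtain ⟨w, k, rfl⟩ := hx
  by_cases h : s.cs.IsRightDescent w k
  · exact .inr (s.corootRep_single_nonpos h)
  · exact .inl (s.corootRep_single_nonneg h)

lemma corootRefl_mem_coroots {x : I → ℝ} (hx : x ∈ s.coroots) (i : I) :
    s.corootRefl i x ∈ s.coroots := by
  obtain ⟨w, k, rfl⟩ := hx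
  exact ⟨s.cs.simple i * w, k, by rw [map_mul, LinearEquiv.mul_apply, corootRep_simple]⟩

lemma mem_bot_of_mem_coroots {x : I → ℝ} (hx : x ∈ s.coroots) (j : I) :
    x j ∈ (⊥ : Subring ℝ) := by
  obtain ⟨w, k, rfl⟩ := hx
  exact s.corootRep_mem_bot w (fun l => by rw [Pi.single_apply]; split_ifs <;> simp) j

lemma ne_zero_of_mem_coroots {x : I → ℝ} (hx : x ∈ s.coroots) : x ≠ 0 := by
  obtain ⟨w, k, rfl⟩ := hx
  simp

/-- If `w (h k) = c • h i` then `w⁻¹ (h i) = c⁻¹ • h k`, so both `c` and `c⁻¹` are integers. -/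
lemma eq_one_of_smul_single_mem_coroots {c : ℝ} (hc : 0 < c) {i : I}
    (h : c • Pi.single i 1 ∈ s.coroots) : c = 1 := by
  obtain ⟨w, k, hw⟩ := h
  have hinv : s.corootRep w⁻¹ (Pi.single i 1) = c⁻¹ • Pi.single k 1 := by
    rw [← inv_smul_smul₀ hc.ne' (Pi.single i 1 : I → ℝ), map_smul, ← hw, ← LinearEquiv.mul_apply,
      ← map_mul, inv_mul_cancel, map_one]
    rfl
  have hc' := s.mem_bot_of_mem_coroots ⟨w, k, hw⟩ i
  have hc'' := s.mem_bot_of_mem_coroots ⟨w⁻¹, i, hinv⟩ k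
  simp only [Pi.smul_apply, Pi.single_eq_same, smul_eq_mul, mul_one] at hc' hc''
  obtain ⟨a, rfl⟩ := Subring.mem_bot.mp hc'
  obtain ⟨b, hb⟩ := Subring.mem_bot.mp hc''
  have hab : a * b = 1 := by
    have : (a : ℝ) * b = 1 := by rw [hb]; exact mul_inv_cancel₀ hc.ne'
    exact_mod_cast this
  rcases Int.eq_one_or_neg_one_of_mul_eq_one hab with rfl | rfl
  · simp
  · norm_num at hc

lemma eq_single_of_mem_posCoroots {x : I → ℝ} (hx : x ∈ s.posCoroots) {i : I}
    (hsupp : ∀ k, k ≠ i → x k = 0) : x = Pi.single i 1 := by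
  have hxi : x = x i • Pi.single i 1 := by
    ext k
    obtain rfl | hk := eq_or_ne k i
    · simp
    · simp [hsupp k hk, hk]
  have hpos : 0 < x i := by
    refine (hx.2 i).lt_of_ne fun h => s.ne_zero_of_mem_coroots hx.1 ?_
    rw [hxi, ← h, Pi.zero_apply, zero_smul]
  rw [hxi, s.eq_one_of_smul_single_mem_coroots hpos (hxi ▸ hx.1), one_smul]

lemma corootRefl_mem_posCoroots {x : I → ℝ} (hx : x ∈ s.posCoroots) {i : I}
    (hne : x ≠ Pi.single i 1) : s.corootRefl i x ∈ s.posCoroots := by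
  refine ⟨s.corootRefl_mem_coroots hx.1 i, ?_⟩
  refine (s.nonneg_or_nonpos_of_mem_coroots (s.corootRefl_mem_coroots hx.1 i)).resolve_right ?_
  intro hle
  refine hne (s.eq_single_of_mem_posCoroots hx fun k hk => le_antisymm ?_ (hx.2 k))
  simpa [s.corootRefl_apply_of_ne hk] using hle k

def inversionSet (w : s.cox.Group) : Set (I → ℝ) := {x | x ∈ s.posCoroots ∧ ¬0 ≤ s.corootRep w x}

lemma inversionSet_mul_simple_subset (w : s.cox.Group) (i : I) :
    s.inversionSet (w * s.cs.simple i) ⊆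
      insert (Pi.single i 1) (s.corootRefl i '' s.inversionSet w) := by
  rintro x ⟨hx, hneg⟩
  by_cases hxi : x = Pi.single i 1
  · exact .inl hxi
  refine .inr ⟨s.corootRefl i x, ⟨s.corootRefl_mem_posCoroots hx hxi, ?_⟩,
    s.corootRefl_involutive i x⟩
  rwa [map_mul, LinearEquiv.mul_apply, corootRep_simple] at hneg

lemma finite_inversionSet (w : s.cox.Group) : (s.inversionSet w).Finite := by
  induction w using s.cs.simple_induction_right with
  | one => exact Set.finite_empty.subset fun x hx => (hx.2 (by simpa using hx.1.2)).elim
  | mul_simple_right w i ih =>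
    exact ((ih.image _).insert _).subset (s.inversionSet_mul_simple_subset w i)

def negCoroots (v : V) : Set (I → ℝ) := {x | x ∈ s.posCoroots ∧ s.corootComb x v < 0}

lemma finite_negCoroots_of_mem_titsCone {v : V} (hv : v ∈ s.titsCone) :
    (s.negCoroots v).Finite := by
  obtain ⟨_, hw, y, hy, rfl⟩ := hv
  obtain ⟨w, rfl⟩ := s.weyl_le_range_weylRep hw
  refine (s.finite_inversionSet w⁻¹).subset fun x ⟨hx, hneg⟩ => ⟨hx, fun hnonneg => ?_⟩
  rw [corootComb_weylRep] at hneg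
  exact (s.corootComb_nonneg hnonneg hy).not_gt hneg

lemma negCoroots_reflE_subset {v : V} {i : I} (hi : s.coroot i v < 0) :
    s.negCoroots (s.reflE i v) ⊆ s.corootRefl i '' (s.negCoroots v \ {Pi.single i 1}) := by
  rintro x ⟨hx, hneg⟩
  have hxi : x ≠ Pi.single i 1 := by
    rintro rfl
    rw [corootComb_single, coroot_reflE_self] at hneg
    linarith
  refine ⟨s.corootRefl i x, ⟨⟨s.corootRefl_mem_posCoroots hx hxi, ?_⟩, fun h => ?_⟩,
    s.corootRefl_involutive i x⟩
  · rwa [corootComb_corootRefl]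
  · have := hx.2 i
    rw [← s.corootRefl_involutive i x, Set.mem_singleton_iff.mp h, corootRefl_single_self] at this
    norm_num at this

lemma mem_titsCone_of_finite_negCoroots {v : V} (hv : (s.negCoroots v).Finite) :
    v ∈ s.titsCone := by
  induction hn : (s.negCoroots v).ncard using Nat.strong_induction_on generalizing v with
  | _ n ih =>
  by_cases hC : v ∈ s.domChamber
  · exact s.domChamber_subset_titsCone hC
  obtain ⟨i, hi⟩ : ∃ i, s.coroot i v < 0 := by simpa [domChamber] using hC
  have hsub := s.negCoroots_reflE_subset hi
  have hδ : Pi.single i 1 ∈ s.negCoroots v := ⟨⟨⟨1, i, rfl⟩, by simp⟩, by rwa [corootComb_single]⟩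
  have hfin : (s.negCoroots (s.reflE i v)).Finite := (hv.sdiff.image _).subset hsub
  have hlt : (s.negCoroots (s.reflE i v)).ncard < n := by
    calc _ ≤ (s.corootRefl i '' (s.negCoroots v \ {Pi.single i 1})).ncard :=
          Set.ncard_le_ncard hsub (hv.sdiff.image _)
      _ ≤ (s.negCoroots v \ {Pi.single i 1}).ncard := Set.ncard_image_le hv.sdiff
      _ < n := hn ▸ Set.ncard_sdiff_singleton_lt_of_mem hδ hv
  have h := s.reflE_mem_titsCone (ih _ hlt hfin rfl) i
  rwa [show s.reflE i (s.reflE i v) = v from s.reflMap_involutive i v] at h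

theorem mem_titsCone_iff_finite_negCoroots {v : V} :
    v ∈ s.titsCone ↔ (s.negCoroots v).Finite :=
  ⟨s.finite_negCoroots_of_mem_titsCone, s.mem_titsCone_of_finite_negCoroots⟩

theorem add_mem_titsCone {x y : V} (hx : x ∈ s.titsCone) (hy : y ∈ s.titsCone) :
    x + y ∈ s.titsCone := by
  rw [mem_titsCone_iff_finite_negCoroots] at hx hy ⊢
  refine (hx.union hy).subset fun z ⟨hz, hneg⟩ => ?_
  rw [map_add] at hneg
  rcases lt_or_ge (s.corootComb z x) 0 with h | h
  · exact .inl ⟨hz, h⟩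
  · exact .inr ⟨hz, by linarith⟩

theorem smul_mem_titsCone {c : ℝ} (hc : 0 ≤ c) {x : V} (hx : x ∈ s.titsCone) :
    c • x ∈ s.titsCone := by
  obtain rfl | hc := hc.eq_or_lt
  · exact zero_smul ℝ x ▸ s.domChamber_subset_titsCone fun i => by simp
  rw [mem_titsCone_iff_finite_negCoroots] at hx ⊢
  refine hx.subset fun z ⟨hz, hneg⟩ => ⟨hz, ?_⟩
  rw [map_smul, smul_eq_mul] at hneg
  exact neg_of_mul_neg_right hneg hc.le

end Coroots

end GCMRep

end

/-- The Tits cone `Y = W · C` is a convex cone; in particular it is closed under addition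
and under multiplication by nonnegative scalars. -/
theorem titsCone_convexCone
    {I V : Type*} [Fintype I] [AddCommGroup V] [Module ℝ V] (s : GCMRep I V) :
    Convex ℝ s.titsCone ∧
    (∀ x ∈ s.titsCone, ∀ y ∈ s.titsCone, x + y ∈ s.titsCone) ∧
    (∀ c : ℝ, 0 ≤ c → ∀ x ∈ s.titsCone, c • x ∈ s.titsCone) :=
  ⟨fun _ hx _ hy _ _ ha hb _ => s.add_mem_titsCone (s.smul_mem_titsCone ha hx)
      (s.smul_mem_titsCone hb hy),
    fun _ hx _ hy => s.add_mem_titsCone hx hy, fun _ hc _ hx => s.smul_mem_titsCone hc hx⟩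
end

section
/- The dominant chamber C is a fundamental domain for the action of the Weyl group W on the Tits cone Y: every W-orbit in Y intersects C in exactly one point. -/
/-!
Existence is the definition of the Tits cone; the content is uniqueness (Kac, Prop. 3.12).
If `w x = y` with `x, y` dominant and `r i` is the last letter of a reduced word for `w`, the key
lemma below, applied to the contragredient representation, says that `w` sends the coroot `h i`
to a nonpositive combination of simple coroots. Evaluating at `y` gives
`0 ≤ -(h i)(w⁻¹ y) = -(h i)(x) ≤ 0`, so `r i` fixes `x` and induction on the length of `w` applies.

The key lemma, "if `r i` does not shorten `w` then `w (α i)` is a nonnegative combination of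
simple roots", is proved as in Humphreys' *Reflection groups and Coxeter groups*, §5.4, by
reduction to the subgroup generated by two simple reflections `r s, r t`. There the alternating
words have nonnegative coefficients on `α s` for all lengths when `a_st a_ts ≥ 4`; otherwise the
Cartan integers force a braid relation of length `2, 3, 4` or `6`, beyond which alternating words
are no longer reduced.
-/

namespace GCMRep

open Set

variable {I V : Type*} [AddCommGroup V] [Module ℝ V]

section Words

variable (P : GCMRep I V)

lemma reflE_apply (i : I) (v : V) : P.reflE i v = v - P.coroot i v • P.α i := rfl

lemma reflE_mul_self (i : I) : P.reflE i * P.reflE i = 1 :=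
  LinearEquiv.ext (P.reflMap_involutive i)

lemma reflE_inv (i : I) : (P.reflE i)⁻¹ = P.reflE i :=
  inv_eq_of_mul_eq_one_left (P.reflE_mul_self i)

lemma reflE_apply_of_coroot_eq_zero {i : I} {v : V} (h : P.coroot i v = 0) :
    P.reflE i v = v := by
  rw [reflE_apply, h, zero_smul, sub_zero]

lemma reflE_apply_α_self (i : I) : P.reflE i (P.α i) = -P.α i := by
  rw [reflE_apply, P.diag]
  module

def wordProd (ω : List I) : V ≃ₗ[ℝ] V := (ω.map P.reflE).prod

@[simp] lemma wordProd_nil : P.wordProd [] = 1 := rfl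

@[simp] lemma wordProd_cons (i : I) (ω : List I) :
    P.wordProd (i :: ω) = P.reflE i * P.wordProd ω := by
  simp [wordProd]

@[simp] lemma wordProd_append (ω ω' : List I) :
    P.wordProd (ω ++ ω') = P.wordProd ω * P.wordProd ω' := by
  simp [wordProd]

lemma wordProd_append_singleton (ω : List I) (i : I) :
    P.wordProd (ω ++ [i]) = P.wordProd ω * P.reflE i := by
  simp

lemma wordProd_append_singleton_mul_reflE (ω : List I) (i : I) :
    P.wordProd (ω ++ [i]) * P.reflE i = P.wordProd ω := by
  rw [wordProd_append_singleton, mul_assoc, reflE_mul_self, mul_one]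

lemma wordProd_apply_of_coroot_eq_zero {ω : List I} {v : V} (h : ∀ i ∈ ω, P.coroot i v = 0) :
    P.wordProd ω v = v := by
  induction ω with
  | nil => rfl
  | cons i ω ih =>
    simp only [List.mem_cons, forall_eq_or_imp] at h
    rw [wordProd_cons, LinearEquiv.mul_apply, ih h.2, P.reflE_apply_of_coroot_eq_zero h.1]

lemma wordProd_reverse (ω : List I) : P.wordProd ω.reverse = (P.wordProd ω)⁻¹ := by
  induction ω with
  | nil => simp
  | cons i ω ih => simp [ih, reflE_inv]

lemma mem_weyl_iff {w : V ≃ₗ[ℝ] V} : w ∈ P.weyl ↔ ∃ ω, P.wordProd ω = w := by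
  constructor
  · intro hw
    induction hw using Subgroup.closure_induction with
    | mem x hx =>
      obtain ⟨i, rfl⟩ := hx
      exact ⟨[i], by simp⟩
    | one => exact ⟨[], rfl⟩
    | mul x y _ _ hx hy =>
      obtain ⟨ω, rfl⟩ := hx
      obtain ⟨ω', rfl⟩ := hy
      exact ⟨ω ++ ω', P.wordProd_append ω ω'⟩
    | inv x _ hx =>
      obtain ⟨ω, rfl⟩ := hx
      exact ⟨ω.reverse, P.wordProd_reverse ω⟩
  · rintro ⟨ω, rfl⟩
    refine list_prod_mem fun w hw => ?_
    obtain ⟨i, -, rfl⟩ := List.mem_map.1 hw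
    exact Subgroup.subset_closure ⟨i, rfl⟩

/-- Since `sInf ∅ = 0`, this is `0` when `w` is not a product of the `r i`, `i ∈ J`. -/
noncomputable def lengthIn (J : Set I) (w : V ≃ₗ[ℝ] V) : ℕ :=
  sInf {n | ∃ ω : List I, (∀ i ∈ ω, i ∈ J) ∧ P.wordProd ω = w ∧ ω.length = n}

variable {P} {J : Set I}

lemma lengthIn_wordProd_le {ω : List I} (hω : ∀ i ∈ ω, i ∈ J) :
    P.lengthIn J (P.wordProd ω) ≤ ω.length :=
  Nat.sInf_le ⟨ω, hω, rfl, rfl⟩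

lemma exists_reduced_word {ω : List I} (hω : ∀ i ∈ ω, i ∈ J) :
    ∃ ρ : List I, (∀ i ∈ ρ, i ∈ J) ∧ P.wordProd ρ = P.wordProd ω ∧
      ρ.length = P.lengthIn J (P.wordProd ω) :=
  Nat.sInf_mem (s := {n | ∃ ρ : List I, (∀ i ∈ ρ, i ∈ J) ∧ P.wordProd ρ = P.wordProd ω ∧
    ρ.length = n}) ⟨_, ω, hω, rfl, rfl⟩

lemma lengthIn_wordProd_eq_of_append {ω ω' : List I} (hω : ∀ i ∈ ω, i ∈ J)
    (hω' : ∀ i ∈ ω', i ∈ J) (h : P.lengthIn J (P.wordProd (ω ++ ω')) = ω.length + ω'.length) :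
    P.lengthIn J (P.wordProd ω) = ω.length := by
  refine (lengthIn_wordProd_le hω).antisymm (not_lt.1 fun hlt => ?_)
  obtain ⟨ρ, hρJ, hρ, hρlen⟩ := exists_reduced_word (P := P) hω
  have := lengthIn_wordProd_le (P := P) (J := J) (ω := ρ ++ ω')
    fun i hi => (List.mem_append.1 hi).elim (hρJ i) (hω' i)
  rw [wordProd_append, hρ, ← wordProd_append, h, List.length_append] at this
  omega

end Words

def altWord (s t : I) : ℕ → List I
  | 0 => []
  | k + 1 => altWord t s k ++ [t]

/-- `altCoeff p q k` are the coordinates of `wordProd (altWord s t k) (α s)` on `α s, α t`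
when `p = -(α t)(h s)` and `q = -(α s)(h t)`. -/
def altCoeff (p q : ℝ) : ℕ → ℝ × ℝ
  | 0 => (1, 0)
  | k + 1 =>
    if Even k then ((altCoeff p q k).1, q * (altCoeff p q k).1 - (altCoeff p q k).2)
    else (p * (altCoeff p q k).2 - (altCoeff p q k).1, (altCoeff p q k).2)

section RankTwo

variable {P : GCMRep I V} {s t : I} {p q : ℝ}

@[simp] lemma length_altWord (s t : I) (k : ℕ) : (altWord s t k).length = k := by
  induction k generalizing s t with
  | zero => rfl
  | succ k ih => simp [altWord, ih]

lemma mem_pair_of_mem_altWord {k : ℕ} {i : I} (h : i ∈ altWord s t k) :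
    i ∈ ({s, t} : Set I) := by
  induction k generalizing s t with
  | zero => simp [altWord] at h
  | succ k ih =>
    rcases List.mem_append.1 h with h | h
    · exact pair_comm t s ▸ ih h
    · simp_all

lemma altWord_succ_eq_cons (s t : I) (k : ℕ) :
    altWord s t (k + 1) = (if Even k then t else s) :: altWord s t k := by
  induction k generalizing s t with
  | zero => simp [altWord]
  | succ k ih =>
    rw [altWord, ih, altWord, List.cons_append]
    by_cases hk : Even k <;> simp [Nat.even_add_one, hk]

lemma altWord_isSuffix {k k' : ℕ} (h : k ≤ k') : altWord s t k <:+ altWord s t k' := by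
  induction k', h using Nat.le_induction with
  | base => exact List.suffix_refl _
  | succ k' _ ih => exact ih.trans (altWord_succ_eq_cons s t k' ▸ List.suffix_cons _ _)

lemma altCoeff_nonneg (hp : 0 ≤ p) (hq : 0 ≤ q) (hpq : 4 ≤ p * q) (k : ℕ) :
    0 ≤ (altCoeff p q k).1 ∧ 0 ≤ (altCoeff p q k).2 := by
  suffices H : 0 ≤ (altCoeff p q k).1 ∧ 0 ≤ (altCoeff p q k).2 ∧
      (Even k → 2 * (altCoeff p q k).2 ≤ q * (altCoeff p q k).1) ∧
      (¬Even k → 2 * (altCoeff p q k).1 ≤ p * (altCoeff p q k).2) from ⟨H.1, H.2.1⟩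
  induction k with
  | zero => simp [altCoeff, hq]
  | succ k ih =>
    obtain ⟨hx, hy, heven, hodd⟩ := ih
    by_cases hk : Even k
    · have h := heven hk
      have hk' : ¬Even (k + 1) := by simpa [Nat.even_add_one] using hk
      rw [altCoeff, if_pos hk]
      refine ⟨hx, by linarith, fun h' => absurd h' hk', fun _ => ?_⟩
      nlinarith [mul_le_mul_of_nonneg_left h hp, mul_le_mul_of_nonneg_right hpq hx]
    · have h := hodd hk
      have hk' : Even (k + 1) := Nat.even_add_one.2 hk
      rw [altCoeff, if_neg hk]
      refine ⟨by linarith, hy, fun _ => ?_, fun h' => absurd hk' h'⟩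
      nlinarith [mul_le_mul_of_nonneg_left h hq, mul_le_mul_of_nonneg_right hpq hy]

lemma wordProd_altWord_apply_α (hp : P.coroot s (P.α t) = -p) (hq : P.coroot t (P.α s) = -q)
    (k : ℕ) :
    P.wordProd (altWord s t k) (P.α s) =
      (altCoeff p q k).1 • P.α s + (altCoeff p q k).2 • P.α t := by
  induction k with
  | zero => simp [altWord, altCoeff]
  | succ k ih =>
    rw [altWord_succ_eq_cons, wordProd_cons, LinearEquiv.mul_apply, ih, altCoeff]
    by_cases hk : Even k
    · simp only [if_pos hk, reflE_apply, map_add, map_smul, hq, P.diag]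
      module
    · simp only [if_neg hk, reflE_apply, map_add, map_smul, hp, P.diag]
      module

lemma wordProd_altWord_succ_apply_α (k : ℕ) :
    P.wordProd (altWord t s (k + 1)) (P.α s) = -P.wordProd (altWord s t k) (P.α s) := by
  rw [altWord, wordProd_append_singleton, LinearEquiv.mul_apply, reflE_apply_α_self, map_neg]

lemma exists_eq_add_of_coroot_eq_zero (hp : P.coroot s (P.α t) = -p)
    (hq : P.coroot t (P.α s) = -q) (hpq : p * q ≠ 4) (v : V) :
    ∃ (a b : ℝ) (u : V), P.coroot s u = 0 ∧ P.coroot t u = 0 ∧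
      v = a • P.α s + b • P.α t + u := by
  have hdet : 4 - p * q ≠ 0 := sub_ne_zero.2 (Ne.symm hpq)
  set a := (2 * P.coroot s v + p * P.coroot t v) / (4 - p * q)
  set b := (q * P.coroot s v + 2 * P.coroot t v) / (4 - p * q)
  refine ⟨a, b, v - a • P.α s - b • P.α t, ?_, ?_, by abel⟩
  · simp only [map_sub, map_smul, P.diag, hp, smul_eq_mul, a, b]
    field_simp
    ring
  · simp only [map_sub, map_smul, P.diag, hq, smul_eq_mul, a, b]
    field_simp
    ring

lemma wordProd_altWord_apply_α_eq (hp : P.coroot s (P.α t) = -p)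
    (hq : P.coroot t (P.α s) = -q) {m : ℕ} (hm : altCoeff p q (m + 1) = -altCoeff p q m) :
    P.wordProd (altWord s t (m + 1)) (P.α s) = P.wordProd (altWord t s (m + 1)) (P.α s) := by
  rw [wordProd_altWord_succ_apply_α, wordProd_altWord_apply_α hp hq,
    wordProd_altWord_apply_α hp hq, hm, Prod.fst_neg, Prod.snd_neg, neg_smul, neg_smul, neg_add]

/-- The braid relation: by `hm`, `hm'` both sides agree on `α s` and `α t`, and both fix the
common kernel of `h s` and `h t`. -/
lemma wordProd_altWord_eq (hp : P.coroot s (P.α t) = -p) (hq : P.coroot t (P.α s) = -q)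
    (hpq : p * q ≠ 4) {m : ℕ} (hm : altCoeff p q (m + 1) = -altCoeff p q m)
    (hm' : altCoeff q p (m + 1) = -altCoeff q p m) :
    P.wordProd (altWord s t (m + 1)) = P.wordProd (altWord t s (m + 1)) := by
  refine LinearEquiv.ext fun v => ?_
  obtain ⟨a, b, u, hus, hut, rfl⟩ := exists_eq_add_of_coroot_eq_zero hp hq hpq v
  have hu : ∀ (x y : I) (k : ℕ), x ∈ ({s, t} : Set I) → y ∈ ({s, t} : Set I) →
      P.wordProd (altWord x y k) u = u := fun x y k hx hy =>
    P.wordProd_apply_of_coroot_eq_zero fun i hi => by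
      rcases mem_pair_of_mem_altWord hi with rfl | rfl <;> rcases hx with rfl | rfl <;>
        rcases hy with rfl | rfl <;> assumption
  simp only [map_add, map_smul, wordProd_altWord_apply_α_eq hp hq hm,
    (wordProd_altWord_apply_α_eq hq hp hm').symm, hu s t _ (by simp) (by simp),
    hu t s _ (by simp) (by simp)]

lemma le_of_wordProd_altWord_eq {m : ℕ}
    (hbraid : P.wordProd (altWord s t (m + 1)) = P.wordProd (altWord t s (m + 1))) {k : ℕ}
    (hred : P.lengthIn {s, t} (P.wordProd (altWord s t k)) = k)
    (hred_s : k ≤ P.lengthIn {s, t} (P.wordProd (altWord s t k) * P.reflE s)) : k ≤ m := by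
  have hpair : ∀ {x y : I} {k : ℕ}, ∀ i ∈ altWord x y k, i ∈ ({x, y} : Set I) :=
    fun _ hi => mem_pair_of_mem_altWord hi
  by_contra! hk
  rcases (Nat.succ_le_of_lt hk).eq_or_lt with rfl | hk
  · rw [hbraid, altWord, wordProd_append_singleton_mul_reflE] at hred_s
    have := lengthIn_wordProd_le (P := P) (hpair (x := s) (y := t) (k := m))
    rw [length_altWord] at this
    omega
  · obtain ⟨l, hl⟩ := altWord_isSuffix (s := s) (t := t) hk
    have hcancel : P.wordProd (altWord s t (m + 2)) = P.wordProd (altWord t s m) := by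
      have hx : (if Even (m + 1) then t else s) = if Even m then s else t := by
        by_cases hm : Even m <;> simp [Nat.even_add_one, hm]
      rw [altWord_succ_eq_cons, wordProd_cons, hbraid, altWord_succ_eq_cons, wordProd_cons, hx,
        ← mul_assoc, reflE_mul_self, one_mul]
    have hlen := lengthIn_wordProd_le (P := P) (J := {s, t}) (ω := l ++ altWord t s m)
      fun i hi => (List.mem_append.1 hi).elim
        (fun hi => hpair i (hl ▸ List.mem_append_left _ hi))
        (fun hi => pair_comm t s ▸ hpair i hi)
    rw [wordProd_append, ← hcancel, ← wordProd_append, hl, hred] at hlen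
    have := congrArg List.length hl
    simp only [List.length_append, length_altWord] at this hlen
    omega

/-- The periods `m + 1 = 2, 3, 4, 6` are the orders of `r s * r t` in types
`A₁ × A₁`, `A₂`, `B₂`, `G₂`. -/
lemma exists_altCoeff_period
    (h : (p = 0 ∧ q = 0) ∨ (p = 1 ∧ q = 1) ∨ (p = 1 ∧ q = 2) ∨ (p = 2 ∧ q = 1) ∨
      (p = 1 ∧ q = 3) ∨ (p = 3 ∧ q = 1)) :
    ∃ m : ℕ, altCoeff p q (m + 1) = -altCoeff p q m ∧ altCoeff q p (m + 1) = -altCoeff q p m ∧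
      ∀ k ≤ m, 0 ≤ (altCoeff p q k).1 ∧ 0 ≤ (altCoeff p q k).2 := by
  rcases h with ⟨rfl, rfl⟩ | ⟨rfl, rfl⟩ | ⟨rfl, rfl⟩ | ⟨rfl, rfl⟩ | ⟨rfl, rfl⟩ | ⟨rfl, rfl⟩ <;>
    [use 1; use 2; use 3; use 3; use 5; use 5] <;>
    refine ⟨by norm_num [altCoeff], by norm_num [altCoeff], fun k hk => ?_⟩ <;>
    interval_cases k <;> norm_num [altCoeff]

lemma int_cases_of_mul_lt_four {a b : ℤ} (ha : 0 ≤ a) (hb : 0 ≤ b) (hab : a = 0 ↔ b = 0)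
    (h : a * b < 4) :
    (a = 0 ∧ b = 0) ∨ (a = 1 ∧ b = 1) ∨ (a = 1 ∧ b = 2) ∨ (a = 2 ∧ b = 1) ∨
      (a = 1 ∧ b = 3) ∨ (a = 3 ∧ b = 1) := by
  rcases eq_or_ne a 0 with rfl | ha0
  · simp_all
  have hb0 : b ≠ 0 := fun h0 => ha0 (hab.2 h0)
  have ha3 : a ≤ 3 := by nlinarith [mul_le_mul_of_nonneg_left (show 1 ≤ b by omega) ha]
  have hb3 : b ≤ 3 := by nlinarith [mul_le_mul_of_nonneg_right (show 1 ≤ a by omega) hb]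
  interval_cases a <;> interval_cases b <;> simp_all

lemma pair_cases_of_mul_lt_four (hst : s ≠ t) (hp : P.coroot s (P.α t) = -p)
    (hq : P.coroot t (P.α s) = -q) (h : p * q < 4) :
    (p = 0 ∧ q = 0) ∨ (p = 1 ∧ q = 1) ∨ (p = 1 ∧ q = 2) ∨ (p = 2 ∧ q = 1) ∨
      (p = 1 ∧ q = 3) ∨ (p = 3 ∧ q = 1) := by
  obtain ⟨a, ha⟩ := P.integral s t
  obtain ⟨b, hb⟩ := P.integral t s
  obtain rfl : p = ((-a : ℤ) : ℝ) := by push_cast; linarith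
  obtain rfl : q = ((-b : ℤ) : ℝ) := by push_cast; linarith
  have ha0 : (a : ℝ) ≤ 0 := ha ▸ P.offdiag_nonpos s t hst
  have hb0 : (b : ℝ) ≤ 0 := hb ▸ P.offdiag_nonpos t s hst.symm
  have hab : (a : ℝ) = 0 ↔ (b : ℝ) = 0 :=
    ⟨fun h0 => hb ▸ P.symm_zero s t (ha ▸ h0), fun h0 => ha ▸ P.symm_zero t s (hb ▸ h0)⟩
  exact_mod_cast int_cases_of_mul_lt_four (a := -a) (b := -b) (by exact_mod_cast neg_nonneg.2 ha0)
    (by exact_mod_cast neg_nonneg.2 hb0) (by simpa using hab) (by exact_mod_cast h)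

theorem exists_nonneg_coeffs_altWord (hst : s ≠ t) {k : ℕ}
    (hred : P.lengthIn {s, t} (P.wordProd (altWord s t k)) = k)
    (hred_s : k ≤ P.lengthIn {s, t} (P.wordProd (altWord s t k) * P.reflE s)) :
    ∃ a b : ℝ, 0 ≤ a ∧ 0 ≤ b ∧ P.wordProd (altWord s t k) (P.α s) = a • P.α s + b • P.α t := by
  set p := -P.coroot s (P.α t)
  set q := -P.coroot t (P.α s)
  have hp : P.coroot s (P.α t) = -p := (neg_neg _).symm
  have hq : P.coroot t (P.α s) = -q := (neg_neg _).symm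
  suffices h : 0 ≤ (altCoeff p q k).1 ∧ 0 ≤ (altCoeff p q k).2 from
    ⟨_, _, h.1, h.2, wordProd_altWord_apply_α hp hq k⟩
  by_cases h4 : 4 ≤ p * q
  · exact altCoeff_nonneg (neg_nonneg.2 (P.offdiag_nonpos s t hst))
      (neg_nonneg.2 (P.offdiag_nonpos t s hst.symm)) h4 k
  · obtain ⟨m, hm, hm', hpos⟩ :=
      exists_altCoeff_period (pair_cases_of_mul_lt_four hst hp hq (not_le.1 h4))
    exact hpos k (le_of_wordProd_altWord_eq
      (wordProd_altWord_eq hp hq (by linarith) hm hm') hred hred_s)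

lemma eq_altWord_of_lengthIn_eq {ω : List I} (hω : ∀ i ∈ ω, i ∈ ({s, t} : Set I))
    (hred : P.lengthIn {s, t} (P.wordProd (ω ++ [t])) = ω.length + 1) :
    ω ++ [t] = altWord s t (ω.length + 1) := by
  induction ω using List.reverseRec generalizing s t with
  | nil => rfl
  | append_singleton ω x ih =>
    have hωJ : ∀ i ∈ ω, i ∈ ({s, t} : Set I) := fun i hi => hω i (List.mem_append_left _ hi)
    rcases hω x (by simp) with hxs | hxt
    · rw [hxs] at hred ⊢
      have hred' := lengthIn_wordProd_eq_of_append (ω' := [t])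
        (fun i hi => (List.mem_append.1 hi).elim (hωJ i) (by simp_all)) (by simp) hred
      rw [pair_comm] at hωJ hred'
      rw [List.length_append, List.length_singleton] at hred'
      rw [ih hωJ hred', length_altWord]
      rfl
    · have := lengthIn_wordProd_le (P := P) hωJ
      rw [Set.mem_singleton_iff.1 hxt, List.append_assoc, wordProd_append] at hred
      simp only [List.singleton_append, wordProd_cons, wordProd_nil, mul_one, reflE_mul_self,
        List.length_append, List.length_singleton] at hred
      omega

theorem exists_nonneg_coeffs_of_lengthIn (hst : s ≠ t) {ω : List I}
    (hω : ∀ i ∈ ω, i ∈ ({s, t} : Set I))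
    (hred : P.lengthIn {s, t} (P.wordProd ω) = ω.length)
    (hred_s : ω.length ≤ P.lengthIn {s, t} (P.wordProd ω * P.reflE s)) :
    ∃ a b : ℝ, 0 ≤ a ∧ 0 ≤ b ∧ P.wordProd ω (P.α s) = a • P.α s + b • P.α t := by
  rcases ω.eq_nil_or_concat' with rfl | ⟨ω, x, rfl⟩
  · exact ⟨1, 0, zero_le_one, le_rfl, by simp⟩
  have hωJ : ∀ i ∈ ω, i ∈ ({s, t} : Set I) := fun i hi => hω i (List.mem_append_left _ hi)
  rw [List.length_append, List.length_singleton] at hred hred_s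
  rcases hω x (by simp) with rfl | rfl
  · rw [wordProd_append_singleton_mul_reflE] at hred_s
    have := lengthIn_wordProd_le (P := P) hωJ
    omega
  · have hω' := eq_altWord_of_lengthIn_eq hωJ hred
    rw [hω'] at hred hred_s ⊢
    exact exists_nonneg_coeffs_altWord hst hred hred_s

end RankTwo

section Positivity

def rootCone (P : GCMRep I V) : PointedCone ℝ V := PointedCone.hull ℝ (range P.α)

def IsReducedFactorization (P : GCMRep I V) (J : Set I) (w : V ≃ₗ[ℝ] V) (u d : List I) :
    Prop :=
  (∀ i ∈ d, i ∈ J) ∧ P.wordProd u * P.wordProd d = w ∧ u.length + d.length = P.lengthIn univ w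

variable {P : GCMRep I V}

lemma α_mem_rootCone (i : I) : P.α i ∈ P.rootCone := PointedCone.subset_hull ⟨i, rfl⟩

lemma lengthIn_univ_wordProd_le (ω : List I) : P.lengthIn univ (P.wordProd ω) ≤ ω.length :=
  lengthIn_wordProd_le fun _ _ => mem_univ _

namespace IsReducedFactorization

variable {J : Set I} {w : V ≃ₗ[ℝ] V} {u d : List I}

lemma lengthIn_right (h : P.IsReducedFactorization J w u d) :
    P.lengthIn J (P.wordProd d) = d.length := by
  obtain ⟨hd, hw, hlen⟩ := h
  refine (lengthIn_wordProd_le hd).antisymm ?_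
  obtain ⟨ρ, -, hρ, hρlen⟩ := exists_reduced_word (P := P) hd
  have := lengthIn_univ_wordProd_le (P := P) (u ++ ρ)
  rw [wordProd_append, hρ, hw, List.length_append] at this
  omega

lemma le_lengthIn_mul_reflE (h : P.IsReducedFactorization J w u d) {i : I} (hi : i ∈ J)
    (hw : P.lengthIn univ w ≤ P.lengthIn univ (w * P.reflE i)) :
    d.length ≤ P.lengthIn J (P.wordProd d * P.reflE i) := by
  obtain ⟨hd, rfl, hlen⟩ := h
  obtain ⟨ρ, -, hρ, hρlen⟩ := exists_reduced_word (P := P) (ω := d ++ [i])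
    fun j hj => (List.mem_append.1 hj).elim (hd j) (by simp_all)
  have := lengthIn_univ_wordProd_le (P := P) (u ++ ρ)
  rw [wordProd_append, hρ, wordProd_append_singleton, ← mul_assoc, List.length_append] at this
  rw [← wordProd_append_singleton, ← hρlen]
  omega

/-- Take `u` of minimal length: if some `r i`, `i ∈ J`, shortened `u`, it could be moved into
`d`. -/
lemma exists_minimal (h : P.IsReducedFactorization J w u d) :
    ∃ u' d', P.IsReducedFactorization J w u' d' ∧ u'.length ≤ u.length ∧
      ∀ i ∈ J, P.lengthIn univ (P.wordProd u') ≤ P.lengthIn univ (P.wordProd u' * P.reflE i) := by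
  classical
  have hex : ∃ n, ∃ u' d', P.IsReducedFactorization J w u' d' ∧ u'.length = n :=
    ⟨_, u, d, h, rfl⟩
  obtain ⟨u', d', ⟨hd', hw, hlen⟩, hn⟩ := Nat.find_spec hex
  refine ⟨u', d', ⟨hd', hw, hlen⟩, hn ▸ Nat.find_min' hex ⟨u, d, h, rfl⟩,
    fun i hi => not_lt.1 fun hlt => ?_⟩
  obtain ⟨ρ, -, hρ, hρlen⟩ := exists_reduced_word (P := P) (J := univ) (ω := u' ++ [i])
    fun _ _ => mem_univ _
  rw [wordProd_append_singleton] at hρ hρlen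
  have hρu : ρ.length < u'.length := hρlen ▸ hlt.trans_le (lengthIn_univ_wordProd_le u')
  have hprod : P.wordProd ρ * P.wordProd (i :: d') = w := by
    rw [wordProd_cons, hρ, mul_assoc, ← mul_assoc (P.reflE i), reflE_mul_self, one_mul, hw]
  have hρd : P.IsReducedFactorization J w ρ (i :: d') := by
    refine ⟨by simpa [hi] using hd', hprod, ?_⟩
    have := lengthIn_univ_wordProd_le (P := P) (ρ ++ i :: d')
    rw [wordProd_append, hprod, List.length_append] at this
    simp only [List.length_cons] at this ⊢
    omega
  exact Nat.find_min hex (hn ▸ hρu) ⟨ρ, i :: d', hρd, rfl⟩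

end IsReducedFactorization

/-- Induction on the length of `w`: if `r t` is the last letter of a reduced word for `w`, a
minimal reduced factorization `w = v * d` with `d` a word in `i, t` reduces the claim to
`v (α i)`, `v (α t)` and the rank-two computation of `d (α i)`. -/
theorem wordProd_apply_α_mem_rootCone {ω : List I} {i : I}
    (h : P.lengthIn univ (P.wordProd ω) ≤ P.lengthIn univ (P.wordProd ω * P.reflE i)) :
    P.wordProd ω (P.α i) ∈ P.rootCone := by
  induction hn : P.lengthIn univ (P.wordProd ω) using Nat.strong_induction_on
    generalizing ω i with
  | _ n ih =>
  obtain ⟨ρ, -, hρ, hρlen⟩ := exists_reduced_word (P := P) (J := univ) (ω := ω)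
    fun _ _ => mem_univ _
  rw [← hρ] at h hn ⊢
  rw [← hρ, hn] at hρlen
  rcases ρ.eq_nil_or_concat' with rfl | ⟨ρ, t, rfl⟩
  · exact α_mem_rootCone i
  rw [List.length_append, List.length_singleton] at hρlen
  have hti : t ≠ i := by
    rintro rfl
    rw [wordProd_append_singleton_mul_reflE] at h
    have := lengthIn_univ_wordProd_le (P := P) ρ
    omega
  have hρt : P.IsReducedFactorization {i, t} (P.wordProd (ρ ++ [t])) ρ [t] :=
    ⟨by simp, by simp, by rw [hn, ← hρlen]; rfl⟩
  obtain ⟨u, d, hud, hu, hmin⟩ := hρt.exists_minimal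
  obtain ⟨a, b, ha, hb, hd⟩ := exists_nonneg_coeffs_of_lengthIn hti.symm hud.1
    hud.lengthIn_right (hud.le_lengthIn_mul_reflE (by simp) h)
  have hu_lt : P.lengthIn univ (P.wordProd u) < n :=
    (lengthIn_univ_wordProd_le u).trans_lt (by omega)
  rw [← hud.2.1, LinearEquiv.mul_apply, hd, map_add, map_smul, map_smul]
  exact add_mem (PointedCone.smul_mem _ ha (ih _ hu_lt (hmin i (by simp)) rfl))
    (PointedCone.smul_mem _ hb (ih _ hu_lt (hmin t (by simp)) rfl))

theorem neg_wordProd_apply_α_mem_rootCone {ω : List I} {i : I}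
    (h : P.lengthIn univ (P.wordProd ω * P.reflE i) < P.lengthIn univ (P.wordProd ω)) :
    -P.wordProd ω (P.α i) ∈ P.rootCone := by
  have := wordProd_apply_α_mem_rootCone (P := P) (ω := ω ++ [i]) (i := i)
    (by rw [wordProd_append_singleton_mul_reflE, wordProd_append_singleton]; exact h.le)
  rwa [wordProd_append_singleton, LinearEquiv.mul_apply, reflE_apply_α_self, map_neg] at this

end Positivity

section Contragredient

noncomputable def dual (P : GCMRep I V) : GCMRep I (Module.Dual ℝ V) where
  α := P.coroot
  coroot i := Module.Dual.eval ℝ V (P.α i)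
  indep := P.indepCoroot
  indepCoroot := P.indep.map' (Module.Dual.eval ℝ V) (Module.eval_ker ℝ V)
  diag i := P.diag i
  offdiag_nonpos i j h := P.offdiag_nonpos j i h.symm
  integral i j := P.integral j i
  symm_zero i j h := P.symm_zero j i h

variable {P : GCMRep I V}

lemma dual_reflE_apply (i : I) (f : Module.Dual ℝ V) (x : V) :
    P.dual.reflE i f x = f (P.reflE i x) := by
  simp only [reflE_apply, LinearMap.sub_apply, LinearMap.smul_apply, map_sub, map_smul,
    smul_eq_mul]
  exact congrArg (f x - ·) (mul_comm _ _)

lemma dual_wordProd_apply (ω : List I) (f : Module.Dual ℝ V) (x : V) :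
    P.dual.wordProd ω f x = f ((P.wordProd ω)⁻¹ x) := by
  induction ω generalizing f x with
  | nil => rfl
  | cons i ω ih =>
    rw [wordProd_cons, LinearEquiv.mul_apply, dual_reflE_apply, ih, wordProd_cons, mul_inv_rev,
      reflE_inv, LinearEquiv.mul_apply]

lemma dual_wordProd_eq_iff {ω ω' : List I} :
    P.dual.wordProd ω = P.dual.wordProd ω' ↔ P.wordProd ω = P.wordProd ω' := by
  rw [← inv_inj (a := P.wordProd ω)]
  constructor
  · intro h
    refine LinearEquiv.ext fun x => Module.eval_apply_injective ℝ (LinearMap.ext fun f => ?_)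
    simpa [dual_wordProd_apply] using congr($h f x)
  · intro h
    refine LinearEquiv.ext fun f => LinearMap.ext fun x => ?_
    rw [dual_wordProd_apply, dual_wordProd_apply, h]

lemma lengthIn_dual_wordProd (J : Set I) (ω : List I) :
    P.dual.lengthIn J (P.dual.wordProd ω) = P.lengthIn J (P.wordProd ω) := by
  simp only [lengthIn, dual_wordProd_eq_iff]

lemma apply_nonneg_of_mem_dual_rootCone {f : Module.Dual ℝ V} (hf : f ∈ P.dual.rootCone)
    {x : V} (hx : x ∈ P.domChamber) : 0 ≤ f x := by
  have : P.dual.rootCone ≤ (PointedCone.positive ℝ ℝ).comap (Module.Dual.eval ℝ V x) :=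
    Submodule.span_le.2 (range_subset_iff.2 hx)
  exact this hf

theorem eq_of_wordProd_apply_eq {x y : V} (hx : x ∈ P.domChamber) (hy : y ∈ P.domChamber)
    (ω : List I) (h : P.wordProd ω x = y) : x = y := by
  induction hn : P.lengthIn univ (P.wordProd ω) using Nat.strong_induction_on
    generalizing ω with
  | _ n ih =>
  obtain ⟨ρ, -, hρ, hρlen⟩ := exists_reduced_word (P := P) (J := univ) (ω := ω)
    fun _ _ => mem_univ _
  rw [← hρ] at h hn
  rw [← hρ, hn] at hρlen
  rcases ρ.eq_nil_or_concat' with rfl | ⟨ρ, i, rfl⟩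
  · simpa using h
  rw [List.length_append, List.length_singleton] at hρlen
  have hlt : P.lengthIn univ (P.wordProd ρ) < n :=
    (lengthIn_univ_wordProd_le ρ).trans_lt (by omega)
  have hneg : -P.dual.wordProd (ρ ++ [i]) (P.coroot i) ∈ P.dual.rootCone := by
    refine neg_wordProd_apply_α_mem_rootCone (P := P.dual) ?_
    rwa [← wordProd_append_singleton, lengthIn_dual_wordProd, lengthIn_dual_wordProd,
      wordProd_append_singleton (ω := ρ ++ [i]), wordProd_append_singleton_mul_reflE, hn]
  have hxi : P.coroot i x = 0 := by
    have := apply_nonneg_of_mem_dual_rootCone hneg hy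
    rw [LinearMap.neg_apply, dual_wordProd_apply, ← h, LinearEquiv.coe_inv,
      LinearEquiv.symm_apply_apply] at this
    exact le_antisymm (neg_nonneg.1 this) (hx i)
  refine ih _ hlt ρ ?_ rfl
  rw [← h, wordProd_append_singleton, LinearEquiv.mul_apply, P.reflE_apply_of_coroot_eq_zero hxi]

end Contragredient

end GCMRep

theorem domChamber_fundamental_domain_general
    {I V : Type*} [AddCommGroup V] [Module ℝ V] (s : GCMRep I V) :
    ∀ y ∈ s.titsCone, ∃! x : V, x ∈ s.domChamber ∧ ∃ w ∈ s.weyl, y = w x := by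
  rintro y ⟨w, hw, x, hx, rfl⟩
  refine ⟨x, ⟨hx, w, hw, rfl⟩, ?_⟩
  rintro x' ⟨hx', w', hw', hwx⟩
  obtain ⟨ω, hω⟩ := s.mem_weyl_iff.1 (mul_mem (inv_mem hw') hw)
  refine (GCMRep.eq_of_wordProd_apply_eq hx hx' ω ?_).symm
  rw [hω, LinearEquiv.mul_apply, hwx, LinearEquiv.coe_inv, LinearEquiv.symm_apply_apply]

/-- The dominant chamber `C` is a fundamental domain for the action of the Weyl group `W`
on the Tits cone `Y`: every `W`-orbit in `Y` meets `C` in exactly one point. -/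
theorem domChamber_fundamental_domain
    {I V : Type*} [Fintype I] [AddCommGroup V] [Module ℝ V] (s : GCMRep I V) :
    ∀ y ∈ s.titsCone, ∃! x : V, x ∈ s.domChamber ∧ ∃ w ∈ s.weyl, y = w x :=
  domChamber_fundamental_domain_general s
end
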